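/- arXiv:0909.3127 — 8 statements merged into one kernel-verified Lean document; each statement's English description precedes it below -/
import Mathlib

section
/- For any two points p1, p2 in the unit square [0,1]^2, there exists an open axis-parallel rectangle contained in [0,1]^2 whose interior contains neither p1 nor p2 and whose area is at least (3 - √5)/2. -/
/-!
Write `m = (3 - √5)/2`, so that `(1 - m)² = m`. If both points lie at height at least `m`, the
horizontal strip below them works. Otherwise one point lies below height `m`, and the band above it
has height more than `1 - m`; inside that band the other point cuts off a rectangle of width at
least `1 - m` unless its abscissa lies in `(m, 1 - m)`, and then one of the two vertical strips
beside the points has width at least `m`.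
-/

def HasLargeEmptyRect (m : ℝ) (p₁ p₂ : ℝ × ℝ) : Prop :=
  ∃ a b c d : ℝ, 0 ≤ a ∧ a < b ∧ b ≤ 1 ∧ 0 ≤ c ∧ c < d ∧ d ≤ 1 ∧
    ¬ (a < p₁.1 ∧ p₁.1 < b ∧ c < p₁.2 ∧ p₁.2 < d) ∧
    ¬ (a < p₂.1 ∧ p₂.1 < b ∧ c < p₂.2 ∧ p₂.2 < d) ∧
    m ≤ (b - a) * (d - c)

namespace HasLargeEmptyRect

variable {m : ℝ} {p₁ p₂ : ℝ × ℝ}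

theorem symm (h : HasLargeEmptyRect m p₁ p₂) : HasLargeEmptyRect m p₂ p₁ := by
  obtain ⟨a, b, c, d, ha, hab, hb, hc, hcd, hd, h₁, h₂, harea⟩ := h
  exact ⟨a, b, c, d, ha, hab, hb, hc, hcd, hd, h₂, h₁, harea⟩

theorem of_le_snd (hm : 0 < m) (hy₁ : m ≤ p₁.2) (hy₂ : m ≤ p₂.2) (hy₁' : p₁.2 ≤ 1) :
    HasLargeEmptyRect m p₁ p₂ := by
  refine ⟨0, 1, 0, min p₁.2 p₂.2, le_rfl, one_pos, le_rfl, le_rfl,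
    hm.trans_le (le_min hy₁ hy₂), min_le_of_left_le hy₁',
    fun h => h.2.2.2.not_ge (min_le_left _ _), fun h => h.2.2.2.not_ge (min_le_right _ _), ?_⟩
  linarith [le_min hy₁ hy₂]

theorem of_snd_lt (hm : 0 < m) (hm2 : m ≤ (1 - m) ^ 2) (hm1 : m ≤ 1 - m)
    (hp₁ : p₁ ∈ Set.Icc (0 : ℝ × ℝ) 1) (hp₂ : p₂ ∈ Set.Icc (0 : ℝ × ℝ) 1) (hy₁ : p₁.2 < m) :
    HasLargeEmptyRect m p₁ p₂ := by
  obtain ⟨⟨hx₁0, hy₁0⟩, ⟨hx₁1, -⟩⟩ := hp₁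
  obtain ⟨⟨hx₂0, -⟩, ⟨hx₂1, -⟩⟩ := hp₂
  simp only [Prod.fst_zero, Prod.snd_zero, Prod.fst_one] at hx₁0 hy₁0 hx₁1 hx₂0 hx₂1
  have hq : 0 ≤ 1 - m := by linarith
  have hband : 1 - m ≤ 1 - p₁.2 := by linarith
  by_cases hright : 1 - m ≤ p₂.1
  · refine ⟨0, p₂.1, p₁.2, 1, le_rfl, by linarith, hx₂1, hy₁0, by linarith, le_rfl,
      fun h => h.2.2.1.false, fun h => h.2.1.false, ?_⟩
    calc m ≤ (1 - m) * (1 - m) := by rwa [← sq]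
      _ ≤ (p₂.1 - 0) * (1 - p₁.2) := by rw [sub_zero]; gcongr
  by_cases hleft : p₂.1 ≤ m
  · refine ⟨p₂.1, 1, p₁.2, 1, hx₂0, by linarith, le_rfl, hy₁0, by linarith, le_rfl,
      fun h => h.2.2.1.false, fun h => h.1.false, ?_⟩
    calc m ≤ (1 - m) * (1 - m) := by rwa [← sq]
      _ ≤ (1 - p₂.1) * (1 - p₁.2) := by gcongr
  push Not at hright hleft
  by_cases hx₁ : m ≤ p₁.1
  · refine ⟨0, min p₁.1 p₂.1, 0, 1, le_rfl, hm.trans_le (le_min hx₁ hleft.le),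
      min_le_of_left_le hx₁1, le_rfl, one_pos, le_rfl,
      fun h => h.2.1.not_ge (min_le_left _ _), fun h => h.2.1.not_ge (min_le_right _ _), ?_⟩
    linarith [le_min hx₁ hleft.le]
  · have hmax : max p₁.1 p₂.1 ≤ 1 - m := max_le (by linarith) hright.le
    refine ⟨max p₁.1 p₂.1, 1, 0, 1, hx₁0.trans (le_max_left _ _), by linarith, le_rfl,
      le_rfl, one_pos, le_rfl,
      fun h => h.1.not_ge (le_max_left _ _), fun h => h.1.not_ge (le_max_right _ _), ?_⟩
    linarith

theorem of_unitSquare (hm : 0 < m) (hm2 : m ≤ (1 - m) ^ 2) (hm1 : m ≤ 1 - m)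
    (hp₁ : p₁ ∈ Set.Icc (0 : ℝ × ℝ) 1) (hp₂ : p₂ ∈ Set.Icc (0 : ℝ × ℝ) 1) :
    HasLargeEmptyRect m p₁ p₂ := by
  by_cases hy₁ : p₁.2 < m
  · exact of_snd_lt hm hm2 hm1 hp₁ hp₂ hy₁
  by_cases hy₂ : p₂.2 < m
  · exact (of_snd_lt hm hm2 hm1 hp₂ hp₁ hy₂).symm
  exact of_le_snd hm (not_lt.1 hy₁) (not_lt.1 hy₂) hp₁.2.2

end HasLargeEmptyRect

theorem sq_one_sub_three_sub_sqrt_five_div_two : (1 - (3 - √5) / 2) ^ 2 = (3 - √5) / 2 := by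
  have h5 : √5 ^ 2 = 5 := Real.sq_sqrt (by norm_num)
  linear_combination h5 / 4

/-- For any two points in the unit square, there is an open axis-parallel
rectangle inside the unit square avoiding both points, of area at least
`(3 - √5)/2`. -/
theorem stmt_0 (p₁ p₂ : ℝ × ℝ)
    (h₁ : p₁.1 ∈ Set.Icc (0:ℝ) 1 ∧ p₁.2 ∈ Set.Icc (0:ℝ) 1)
    (h₂ : p₂.1 ∈ Set.Icc (0:ℝ) 1 ∧ p₂.2 ∈ Set.Icc (0:ℝ) 1) :
    ∃ a b c d : ℝ, 0 ≤ a ∧ a < b ∧ b ≤ 1 ∧ 0 ≤ c ∧ c < d ∧ d ≤ 1 ∧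
      ¬ (a < p₁.1 ∧ p₁.1 < b ∧ c < p₁.2 ∧ p₁.2 < d) ∧
      ¬ (a < p₂.1 ∧ p₂.1 < b ∧ c < p₂.2 ∧ p₂.2 < d) ∧
      (3 - Real.sqrt 5) / 2 ≤ (b - a) * (d - c) := by
  have h2 : 2 < √5 := Real.lt_sqrt_of_sq_lt (by norm_num)
  have h3 : √5 < 3 := (Real.sqrt_lt' (by norm_num)).2 (by norm_num)
  exact HasLargeEmptyRect.of_unitSquare (by linarith) sq_one_sub_three_sub_sqrt_five_div_two.ge (by linarith)
    ⟨⟨h₁.1.1, h₁.2.1⟩, ⟨h₁.1.2, h₁.2.2⟩⟩ ⟨⟨h₂.1.1, h₂.2.1⟩, ⟨h₂.1.2, h₂.2.2⟩⟩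
end

section
/- For the four points (1/4, 1/2), (1/2, 1/4), (1/2, 3/4), (3/4, 1/2) in the unit square, every open axis-parallel rectangle contained in [0,1]^2 avoiding all four points has area at most 1/4. -/
/-!
Split according to whether the sides `(a, b)` and `(c, d)` contain `1/2`. A side avoiding `1/2`
has length at most `1/2`. If the horizontal side contains `1/2`, the points `(1/2, 1/4)` and
`(1/2, 3/4)` force the vertical side to avoid `1/4` and `3/4`; if it also avoids `1/2` its length
is at most `1/4`, and if it contains `1/2` it lies in `[1/4, 3/4]`. In each of the four cases the
two side lengths multiply to at most `1/4`.
-/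

open Set

section UnitInterval

variable {a b : ℝ}

lemma sub_le_half_of_half_notMem_Ioo (ha : 0 ≤ a) (hb : b ≤ 1) (h : (1 / 2 : ℝ) ∉ Ioo a b) :
    b - a ≤ 1 / 2 := by
  rw [mem_Ioo, not_and_or, not_lt, not_lt] at h
  rcases h with h | h <;> linarith

lemma sub_le_half_of_quarters_notMem_Ioo (ha : 0 ≤ a) (hb : b ≤ 1)
    (h₁ : (1 / 4 : ℝ) ∉ Ioo a b) (h₃ : (3 / 4 : ℝ) ∉ Ioo a b) : b - a ≤ 1 / 2 := by
  rw [mem_Ioo, not_and_or, not_lt, not_lt] at h₁ h₃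
  rcases h₁ with h₁ | h₁ <;> rcases h₃ with h₃ | h₃ <;> linarith

lemma sub_le_quarter_of_quarters_notMem_Ioo (ha : 0 ≤ a) (hb : b ≤ 1)
    (h₁ : (1 / 4 : ℝ) ∉ Ioo a b) (h₂ : (1 / 2 : ℝ) ∉ Ioo a b) (h₃ : (3 / 4 : ℝ) ∉ Ioo a b) :
    b - a ≤ 1 / 4 := by
  rw [mem_Ioo, not_and_or, not_lt, not_lt] at h₁ h₂ h₃
  rcases h₂ with h₂ | h₂
  · rcases h₃ with h₃ | h₃ <;> linarith
  · rcases h₁ with h₁ | h₁ <;> linarith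

end UnitInterval

lemma area_le_quarter_of_avoids {a b c d : ℝ} (ha : 0 ≤ a) (hab : a < b) (hb : b ≤ 1)
    (hc : 0 ≤ c) (hcd : c < d) (hd : d ≤ 1)
    (hW : (1 / 4 : ℝ) ∈ Ioo a b → (1 / 2 : ℝ) ∉ Ioo c d)
    (hS : (1 / 2 : ℝ) ∈ Ioo a b → (1 / 4 : ℝ) ∉ Ioo c d)
    (hN : (1 / 2 : ℝ) ∈ Ioo a b → (3 / 4 : ℝ) ∉ Ioo c d)
    (hE : (3 / 4 : ℝ) ∈ Ioo a b → (1 / 2 : ℝ) ∉ Ioo c d) :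
    (b - a) * (d - c) ≤ 1 / 4 := by
  have hw : 0 ≤ b - a := sub_nonneg.2 hab.le
  have hh : 0 ≤ d - c := sub_nonneg.2 hcd.le
  by_cases hx : (1 / 2 : ℝ) ∈ Ioo a b <;> by_cases hy : (1 / 2 : ℝ) ∈ Ioo c d
  · have hw' := sub_le_half_of_quarters_notMem_Ioo ha hb (fun h => hW h hy) (fun h => hE h hy)
    have hh' := sub_le_half_of_quarters_notMem_Ioo hc hd (hS hx) (hN hx)
    nlinarith
  · have hh' := sub_le_quarter_of_quarters_notMem_Ioo hc hd (hS hx) hy (hN hx)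
    nlinarith
  · have hw' := sub_le_quarter_of_quarters_notMem_Ioo ha hb (fun h => hW h hy) hx
      (fun h => hE h hy)
    nlinarith
  · have hw' := sub_le_half_of_half_notMem_Ioo ha hb hx
    have hh' := sub_le_half_of_half_notMem_Ioo hc hd hy
    nlinarith

/-- For the four points `(1/4,1/2), (1/2,1/4), (1/2,3/4), (3/4,1/2)`,
every open axis-parallel rectangle inside the unit square avoiding all four
points has area at most `1/4`. -/
theorem stmt_2 (a b c d : ℝ) (ha : 0 ≤ a) (hab : a < b) (hb : b ≤ 1)
    (hc : 0 ≤ c) (hcd : c < d) (hd : d ≤ 1)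
    (h : ∀ p : ℝ × ℝ,
      p ∈ ({(1/4, 1/2), (1/2, 1/4), (1/2, 3/4), (3/4, 1/2)} : Set (ℝ × ℝ)) →
      ¬ (a < p.1 ∧ p.1 < b ∧ c < p.2 ∧ p.2 < d)) :
    (b - a) * (d - c) ≤ 1 / 4 := by
  have avoids : ∀ x y : ℝ,
      (x, y) ∈ ({(1/4, 1/2), (1/2, 1/4), (1/2, 3/4), (3/4, 1/2)} : Set (ℝ × ℝ)) →
      x ∈ Ioo a b → y ∉ Ioo c d :=
    fun x y hp hx hy => h _ hp ⟨hx.1, hx.2, hy⟩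
  exact area_le_quarter_of_avoids ha hab hb hc hcd hd (avoids _ _ (by simp))
    (avoids _ _ (by simp)) (avoids _ _ (by simp)) (avoids _ _ (by simp))
end

section
/- For any set S of n points in the unit hypercube [0,1]^d with d ≥ 2, there exists an open axis-parallel box contained in [0,1]^d containing no point of S and having volume at least 1/(n+1). -/
/-!
Cut the cube along the first coordinate into the `n + 1` open slabs
`(k / (n + 1), (k + 1) / (n + 1)) × (0,1)^(d-1)`, `0 ≤ k ≤ n`. They are pairwise disjoint,
so by pigeonhole one of them misses all `n` points, and each has volume `1 / (n + 1)`.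
-/

open Finset Function

theorem Finset.exists_forall_notMem_of_card_lt_of_pairwiseDisjoint {α ι : Type*}
    {S : Finset α} {t : Finset ι} {U : ι → Set α} (hU : (t : Set ι).PairwiseDisjoint U)
    (hcard : #S < #t) : ∃ k ∈ t, ∀ p ∈ S, p ∉ U k := by
  by_contra! hcover
  have : #t ≤ #S := card_le_card_of_forall_subsingleton (fun k p => p ∈ U k) hcover
    fun p _ k hk l hl => hU.elim hk.1 hl.1 (Set.not_disjoint_iff.mpr ⟨p, hk.2, hl.2⟩)
  omega

theorem Finset.exists_forall_notMem_Ioo_zsmul {α : Type*} (S : Finset α) (f : α → ℝ) (h : ℝ)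
    {n : ℕ} (hcard : #S ≤ n) :
    ∃ k : ℤ, 0 ≤ k ∧ k < n + 1 ∧ ∀ p ∈ S, f p ∉ Set.Ioo (k • h) ((k + 1) • h) := by
  obtain ⟨k, hk, hempty⟩ := exists_forall_notMem_of_card_lt_of_pairwiseDisjoint
    (S := S) (t := Ico (0 : ℤ) (n + 1)) (U := fun k : ℤ => f ⁻¹' Set.Ioo (k • h) ((k + 1) • h))
    (fun _ _ _ _ hkl => (Set.pairwise_disjoint_Ioo_zsmul h hkl).preimage f) (by simp; omega)
  rw [mem_Ico] at hk
  exact ⟨k, hk.1, hk.2, hempty⟩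

section SlabBox

variable {d : ℕ} (j : Fin d) {s t : ℝ}

theorem prod_update_one_sub_update_zero :
    ∏ i, (update (1 : Fin d → ℝ) j t i - update (0 : Fin d → ℝ) j s i) = t - s := by
  rw [prod_eq_single j (fun i _ hij => by simp [hij]) (by simp)]
  simp

theorem update_zero_update_one_mem_unitInterval (hs : 0 ≤ s) (hst : s < t) (ht : t ≤ 1)
    (i : Fin d) :
    0 ≤ update (0 : Fin d → ℝ) j s i ∧
      update (0 : Fin d → ℝ) j s i < update (1 : Fin d → ℝ) j t i ∧
      update (1 : Fin d → ℝ) j t i ≤ 1 := by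
  rcases eq_or_ne i j with rfl | hij
  · simp [hs, hst, ht]
  · simp [hij]

end SlabBox

theorem stmt_5_general (d n : ℕ) (hd : 2 ≤ d) (S : Finset (Fin d → ℝ))
    (hcard : S.card = n) :
    ∃ a b : Fin d → ℝ, (∀ i, 0 ≤ a i ∧ a i < b i ∧ b i ≤ 1) ∧
      (∀ p ∈ S, ∃ i, ¬ (a i < p i ∧ p i < b i)) ∧
      1 / ((n : ℝ) + 1) ≤ ∏ i, (b i - a i) := by
  set h : ℝ := ((n : ℝ) + 1)⁻¹
  have hh : 0 < h := by positivity
  let j : Fin d := ⟨0, by omega⟩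
  obtain ⟨k, hk0, hkn, hempty⟩ := S.exists_forall_notMem_Ioo_zsmul (fun p => p j) h hcard.le
  have hstep : (k + 1) • h = k • h + h := by rw [add_zsmul, one_zsmul]
  have htop : (k + 1) • h ≤ 1 := by
    calc (k + 1) • h ≤ ((n : ℤ) + 1) • h := zsmul_le_zsmul_left hh.le (by omega)
      _ = 1 := by simp only [h, zsmul_eq_mul]; push_cast; exact mul_inv_cancel₀ (by positivity)
  refine ⟨update 0 j (k • h), update 1 j ((k + 1) • h),
    update_zero_update_one_mem_unitInterval j (zsmul_nonneg hh.le hk0) (by linarith) htop,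
    fun p hp => ⟨j, by simpa using hempty p hp⟩, ?_⟩
  rw [prod_update_one_sub_update_zero, hstep, add_sub_cancel_left, one_div]

/-- Any `n` points in the unit hypercube `[0,1]^d`, `d ≥ 2`, admit an empty
open axis-parallel box of volume at least `1/(n+1)`. -/
theorem stmt_5 (d n : ℕ) (hd : 2 ≤ d) (S : Finset (Fin d → ℝ))
    (hcard : S.card = n) (hS : ∀ p ∈ S, ∀ i, p i ∈ Set.Icc (0:ℝ) 1) :
    ∃ a b : Fin d → ℝ, (∀ i, 0 ≤ a i ∧ a i < b i ∧ b i ≤ 1) ∧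
      (∀ p ∈ S, ∃ i, ¬ (a i < p i ∧ p i < b i)) ∧
      1 / ((n : ℝ) + 1) ≤ ∏ i, (b i - a i) :=
  stmt_5_general d n hd S hcard
end

section
/- For any set S of n points in the unit square [0,1]^2, there exists an open axis-parallel rectangle contained in [0,1]^2 containing no point of S and having area at least (5/4) · 1/(n+5). -/
/-!
Suppose every empty rectangle has area less than `T`. For each abscissa `ξ` of the points, the
vertical strip between the neighbouring abscissae (or the sides of the square) has some width `w`
and contains only the `k` points on the line `x = ξ`, so every interval of length `T / w` in
`[0, 1]` contains one of their ordinates. The `i`-th smallest of these ordinates (from `i = 0`)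
lies in `(1 - (k - i) T / w, (i + 1) T / w)`, which gives `w / T ≤ 2 k - 2 ∑ |y - 1/2|`. Summing over `ξ`,
the widths add up to more than `2 - 2T` (the strips cover `[0, 1]` twice, except next to the two
vertical sides), while horizontal strips of height `T` each contain a point, which forces
`∑ |y - 1/2| ≥ 1 / (4T) - 3/2` over all points. Together this gives `5/2 < T (2n + 5)`, false for
`T = 5 / (4 (n + 5))`.
-/

open Finset

section Rank

variable {α : Type*} [LinearOrder α]

lemma card_filter_lt_add_card_filter_gt {Y : Finset α} {y : α} (hy : y ∈ Y) :
    #{z ∈ Y | z < y} + #{z ∈ Y | y < z} + 1 = #Y := by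
  have hrest : {z ∈ Y | ¬ z < y} = insert y {z ∈ Y | y < z} := by
    ext z
    simp only [mem_filter, mem_insert, not_lt]
    constructor
    · rintro ⟨hz, hyz⟩
      rcases hyz.eq_or_lt with rfl | hlt
      exacts [Or.inl rfl, Or.inr ⟨hz, hlt⟩]
    · rintro (rfl | ⟨hz, hlt⟩)
      exacts [⟨hy, le_rfl⟩, ⟨hz, hlt.le⟩]
  rw [← card_filter_add_card_filter_not (s := Y) (fun z => z < y), hrest,
    card_insert_of_notMem (by simp)]
  ring

lemma strictMonoOn_card_filter_lt (Y : Finset α) :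
    StrictMonoOn (fun y => #{z ∈ Y | z < y}) Y := by
  intro y₁ hy₁ y₂ _ hlt
  refine card_lt_card ((ssubset_iff_of_subset ?_).2 ⟨y₁, ?_, ?_⟩)
  · exact monotone_filter_right Y fun z _ hz => hz.trans hlt
  · simpa using ⟨hy₁, hlt⟩
  · simp

lemma card_filter_lt_lt_card {Y : Finset α} {y : α} (hy : y ∈ Y) :
    #{z ∈ Y | z < y} < #Y := by
  have := card_filter_lt_add_card_filter_gt hy
  omega

end Rank

lemma sum_max_range_add_two (k : ℕ) :
    ∑ i ∈ range (k + 2), max ((i : ℝ) + 1) ((k + 2 : ℕ) - i) =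
      ∑ i ∈ range k, max ((i : ℝ) + 1) (k - i) + (3 * k + 4) := by
  rw [sum_range_succ', sum_range_succ]
  have hshift : ∀ i ∈ range k, max (((i + 1 : ℕ) : ℝ) + 1) ((k + 2 : ℕ) - (i + 1 : ℕ)) =
      max ((i : ℝ) + 1) (k - i) + 1 := by
    intro i _
    rw [← max_add_add_right]
    push_cast
    ring_nf
  rw [sum_congr rfl hshift, sum_add_distrib, sum_const, card_range]
  push_cast
  rw [max_eq_left (by linarith), max_eq_right (by linarith)]
  simp only [nsmul_eq_mul, mul_one]
  ring

lemma four_mul_sum_max_le (k : ℕ) :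
    4 * ∑ i ∈ range k, max ((i : ℝ) + 1) (k - i) ≤ 3 * k ^ 2 + 2 * k := by
  induction k using Nat.twoStepInduction with
  | zero => simp
  | one => norm_num
  | more k ih _ =>
    rw [sum_max_range_add_two]
    push_cast
    nlinarith [ih]

/- `δ ↦ 1 + 2 M δ ^ 2 - 3 k δ` is convex and nonpositive at both ends `1 / (k + 1)` and `1 / k`. -/
lemma inv_add_two_mul_sum_max_le {k : ℕ} (hk : 1 ≤ k) {δ : ℝ} (h₁ : 1 < (k + 1) * δ)
    (h₂ : k * δ < 1) : 1 / δ + 2 * δ * ∑ i ∈ range k, max ((i : ℝ) + 1) (k - i) ≤ 3 * k := by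
  have hδ : 0 < δ := by nlinarith
  rw [div_add' _ _ _ hδ.ne', div_le_iff₀ hδ]
  obtain rfl | hk2 := hk.eq_or_lt
  · norm_num at h₁ h₂ ⊢
    nlinarith
  · have hk2 : (2 : ℝ) ≤ k := by exact_mod_cast hk2
    have hM := four_mul_sum_max_le k
    nlinarith [mul_nonneg (by linarith : (0 : ℝ) ≤ (k + 1) * δ - 1)
      (by linarith : (0 : ℝ) ≤ 1 - k * δ), mul_le_mul_of_nonneg_right hM (sq_nonneg δ)]

lemma le_sum_max_zero {α : Type*} [Nonempty α] (S : Finset α) (g : α → ℝ) {T : ℝ} (hT : 0 < T)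
    (K : ℕ) (h : ∀ j < K, ∃ p ∈ S, j * T < g p ∧ g p < (j + 1) * T) :
    T * (K * (K - 1) / 2) ≤ ∑ p ∈ S, max (g p) 0 := by
  classical
  have hgauss : ∀ m : ℕ, ∑ j ∈ range m, (j : ℝ) * T = T * (m * (m - 1) / 2) := by
    intro m
    induction m with
    | zero => simp
    | succ m ih => rw [sum_range_succ, ih]; push_cast; ring
  choose! pick hpick hlo hhi using h
  have hinj : Set.InjOn pick (range K : Set ℕ) := by
    intro i hi j hj hij
    simp only [coe_range, Set.mem_Iio] at hi hj
    have hg := congrArg g hij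
    have h₁ : (i : ℝ) < j + 1 :=
      lt_of_mul_lt_mul_right (by linarith [hlo i hi, hhi j hj]) hT.le
    have h₂ : (j : ℝ) < i + 1 :=
      lt_of_mul_lt_mul_right (by linarith [hlo j hj, hhi i hi]) hT.le
    have : i < j + 1 ∧ j < i + 1 := ⟨by exact_mod_cast h₁, by exact_mod_cast h₂⟩
    omega
  calc T * (K * (K - 1) / 2) = ∑ j ∈ range K, (j : ℝ) * T := (hgauss K).symm
    _ ≤ ∑ j ∈ range K, max (g (pick j)) 0 :=
      sum_le_sum fun j hj => le_max_of_le_left (hlo j (mem_range.1 hj)).le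
    _ = ∑ p ∈ (range K).image pick, max (g p) 0 :=
      (sum_image (f := fun p => max (g p) 0) hinj).symm
    _ ≤ ∑ p ∈ S, max (g p) 0 :=
      sum_le_sum_of_subset_of_nonneg
        (image_subset_iff.2 fun j hj => hpick j (mem_range.1 hj)) fun _ _ _ => le_max_right _ _

def MeetsLongIntervals (Y : Finset ℝ) (δ : ℝ) : Prop :=
  ∀ c d : ℝ, 0 ≤ c → d ≤ 1 → δ ≤ d - c → ∃ y ∈ Y, c < y ∧ y < d

namespace MeetsLongIntervals

variable {Y : Finset ℝ} {δ : ℝ}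

lemma pos (hY : MeetsLongIntervals Y δ) : 0 < δ := by
  by_contra! hδ
  obtain ⟨y, -, h₀, h₁⟩ := hY 0 0 le_rfl zero_le_one (by simpa using hδ)
  exact h₀.not_gt h₁

lemma le_card_filter (hY : MeetsLongIntervals Y δ) (m : ℕ) {t : ℝ} (hm : m * δ ≤ t)
    (ht : t ≤ 1) : m ≤ #{y ∈ Y | t - m * δ < y ∧ y < t} := by
  induction m generalizing t with
  | zero => simp
  | succ m ih =>
    have hδ := hY.pos
    push_cast at hm ⊢
    have hmδ : 0 ≤ m * δ := by positivity
    obtain ⟨y₀, hy₀, hty₀, hy₀t⟩ := hY (t - δ) t (by linarith) ht (by linarith)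
    have hrest := ih (t := t - δ) (by linarith) (by linarith)
    calc m + 1 ≤ #(insert y₀ {y ∈ Y | t - δ - m * δ < y ∧ y < t - δ}) := by
          rw [card_insert_of_notMem (by simp [hty₀.not_gt])]
          omega
      _ ≤ #{y ∈ Y | t - (m + 1) * δ < y ∧ y < t} := by
          refine card_le_card (insert_subset ?_ fun y hy => ?_)
          · simp only [mem_filter]
            exact ⟨hy₀, by linarith, hy₀t⟩
          · simp only [mem_filter] at hy ⊢
            exact ⟨hy.1, by linarith, by linarith⟩

lemma lt_mul_card_filter_lt (hY : MeetsLongIntervals Y δ) {t : ℝ} (ht : t ≤ 1) :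
    t < (#{y ∈ Y | y < t} + 1) * δ := by
  by_contra! h
  have := hY.le_card_filter (#{y ∈ Y | y < t} + 1) (by exact_mod_cast h) ht
  have : #{y ∈ Y | t - (#{y ∈ Y | y < t} + 1 : ℕ) * δ < y ∧ y < t} ≤ #{y ∈ Y | y < t} :=
    card_le_card (monotone_filter_right Y fun y _ hy => hy.2)
  omega

lemma one_sub_lt_mul_card_filter_gt (hY : MeetsLongIntervals Y δ) {t : ℝ} (ht : 0 ≤ t) :
    1 - t < (#{y ∈ Y | t < y} + 1) * δ := by
  by_contra! h
  have := hY.le_card_filter (#{y ∈ Y | t < y} + 1) (t := 1) (by push_cast; linarith) le_rfl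
  have : #{y ∈ Y | 1 - (#{y ∈ Y | t < y} + 1 : ℕ) * δ < y ∧ y < 1} ≤ #{y ∈ Y | t < y} :=
    card_le_card (monotone_filter_right Y fun y _ hy => by push_cast at hy; linarith [hy.1])
  omega

lemma sum_abs_sub_half_le (hY : MeetsLongIntervals Y δ)
    (hY01 : ∀ y ∈ Y, y ∈ Set.Icc (0 : ℝ) 1) :
    ∑ y ∈ Y, |y - 1 / 2| ≤ δ * ∑ i ∈ range #Y, max ((i : ℝ) + 1) (#Y - i) - #Y / 2 := by
  set r : ℝ → ℕ := fun y => #{z ∈ Y | z < y}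
  have habs : ∀ y ∈ Y, |y - 1 / 2| ≤ δ * max ((r y : ℝ) + 1) (#Y - r y) - 1 / 2 := by
    intro y hy
    have hlt := hY.lt_mul_card_filter_lt (hY01 y hy).2
    have hgt := hY.one_sub_lt_mul_card_filter_gt (hY01 y hy).1
    have hcard : (#{z ∈ Y | y < z} : ℝ) + 1 = #Y - r y := by
      rw [← card_filter_lt_add_card_filter_gt hy]
      push_cast
      ring
    rw [hcard] at hgt
    have := mul_le_mul_of_nonneg_left (le_max_left ((r y : ℝ) + 1) (#Y - r y)) hY.pos.le
    have := mul_le_mul_of_nonneg_left (le_max_right ((r y : ℝ) + 1) (#Y - r y)) hY.pos.le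
    rw [abs_le]
    constructor <;> linarith
  have hranks : ∑ y ∈ Y, max ((r y : ℝ) + 1) (#Y - r y) ≤
      ∑ i ∈ range #Y, max ((i : ℝ) + 1) (#Y - i) := by
    rw [← sum_image (g := r) (f := fun i : ℕ => max ((i : ℝ) + 1) (#Y - i))
      (strictMonoOn_card_filter_lt Y).injOn]
    refine sum_le_sum_of_subset_of_nonneg ?_ fun i _ _ => ?_
    · intro i hi
      obtain ⟨y, hy, rfl⟩ := mem_image.1 hi
      exact mem_range.2 (card_filter_lt_lt_card hy)
    · exact (by positivity : (0 : ℝ) ≤ i + 1).trans (le_max_left _ _)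
  calc ∑ y ∈ Y, |y - 1 / 2|
      ≤ ∑ y ∈ Y, (δ * max ((r y : ℝ) + 1) (#Y - r y) - 1 / 2) := sum_le_sum habs
    _ = δ * ∑ y ∈ Y, max ((r y : ℝ) + 1) (#Y - r y) - #Y / 2 := by
      rw [sum_sub_distrib, ← mul_sum, sum_const, nsmul_eq_mul]
      ring
    _ ≤ _ := by gcongr; exact hY.pos.le

theorem inv_add_two_mul_sum_abs_le (hY : MeetsLongIntervals Y δ) (hne : Y.Nonempty)
    (hY01 : ∀ y ∈ Y, y ∈ Set.Icc (0 : ℝ) 1) :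
    1 / δ + 2 * ∑ y ∈ Y, |y - 1 / 2| ≤ 2 * #Y := by
  have hδ := hY.pos
  rcases le_or_gt 1 (#Y * δ) with hlarge | hsmall
  · have hinv : 1 / δ ≤ #Y := by rw [div_le_iff₀ hδ]; exact hlarge
    have hhalf : ∑ y ∈ Y, |y - 1 / 2| ≤ #Y * (1 / 2) := by
      refine (sum_le_card_nsmul Y _ (1 / 2) fun y hy => ?_).trans_eq (nsmul_eq_mul _ _)
      have := hY01 y hy
      rw [abs_le]
      constructor <;> linarith [this.1, this.2]
    linarith
  · have hk : 1 ≤ #Y := card_pos.2 hne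
    have hcover : 1 < (#Y + 1) * δ := by
      have h := hY.lt_mul_card_filter_lt le_rfl
      have : (#{y ∈ Y | y < 1} : ℝ) ≤ #Y := by exact_mod_cast card_filter_le _ _
      nlinarith
    linarith [inv_add_two_mul_sum_max_le hk hcover hsmall, hY.sum_abs_sub_half_le hY01]

theorem sum_abs_sub_half_ge (hY : MeetsLongIntervals Y δ) :
    1 / (4 * δ) - 3 / 2 ≤ ∑ y ∈ Y, |y - 1 / 2| := by
  have hδ := hY.pos
  have hnonneg : 0 ≤ ∑ y ∈ Y, |y - 1 / 2| := sum_nonneg fun _ _ => abs_nonneg _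
  rcases lt_or_ge (1 / 2) δ with hbig | hle
  · have : 1 / (4 * δ) < 3 / 2 := by rw [div_lt_iff₀ (by positivity)]; linarith
    linarith
  set s := 1 / (2 * δ) with hs
  have hsδ : δ * s = 1 / 2 := by rw [hs]; field_simp
  have hs1 : 1 ≤ s := by rw [hs, le_div_iff₀ (by positivity)]; linarith
  set K := ⌊s⌋₊
  have hKs : (K : ℝ) ≤ s := Nat.floor_le (by positivity)
  have hsK : s < K + 1 := Nat.lt_floor_add_one s
  have hjδ (j : ℕ) (hj : j < K) : (j + 1) * δ ≤ 1 / 2 := by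
    have : (j : ℝ) + 1 ≤ K := by exact_mod_cast hj
    nlinarith
  have habove := le_sum_max_zero Y (fun y => y - 1 / 2) hδ K fun j hj => by
    obtain ⟨y, hy, h₁, h₂⟩ := hY (1 / 2 + j * δ) (1 / 2 + (j + 1) * δ) (by positivity)
      (by linarith [hjδ j hj]) (by linarith)
    exact ⟨y, hy, by linarith, by linarith⟩
  have hbelow := le_sum_max_zero Y (fun y => -(y - 1 / 2)) hδ K fun j hj => by
    obtain ⟨y, hy, h₁, h₂⟩ := hY (1 / 2 - (j + 1) * δ) (1 / 2 - j * δ) (by linarith [hjδ j hj])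
      (by linarith [mul_nonneg j.cast_nonneg hδ.le]) (by linarith)
    exact ⟨y, hy, by linarith, by linarith⟩
  simp only [← max_zero_add_max_neg_zero_eq_abs_self, sum_add_distrib]
  have hK1 : (1 : ℝ) ≤ K := by exact_mod_cast Nat.one_le_floor_iff s |>.2 hs1
  have hfloor : (s - 1) * (s - 2) ≤ K * (K - 1) := by
    nlinarith [mul_nonneg (by linarith : (0 : ℝ) ≤ K + 1 - s) (by linarith : (0 : ℝ) ≤ K + s - 2)]
  have hquarter : 1 / (4 * δ) = s / 2 := by rw [hs]; field_simp; ring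
  nlinarith [mul_le_mul_of_nonneg_left hfloor hδ.le]

end MeetsLongIntervals

noncomputable def rightNeighbor (X : Finset ℝ) (ξ : ℝ) : ℝ :=
  (insert 1 {x ∈ X | ξ < x}).min' (insert_nonempty _ _)

noncomputable def leftNeighbor (X : Finset ℝ) (ξ : ℝ) : ℝ :=
  (insert 0 {x ∈ X | x < ξ}).max' (insert_nonempty _ _)

section Neighbors

variable {X : Finset ℝ} {ξ : ℝ}

lemma rightNeighbor_le_one : rightNeighbor X ξ ≤ 1 :=
  min'_le _ _ (mem_insert_self _ _)

lemma leftNeighbor_nonneg : 0 ≤ leftNeighbor X ξ :=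
  le_max' _ _ (mem_insert_self _ _)

lemma leftNeighbor_lt_rightNeighbor (hξ : ξ ∈ Set.Icc (0 : ℝ) 1) :
    leftNeighbor X ξ < rightNeighbor X ξ := by
  have hle : leftNeighbor X ξ ≤ ξ :=
    max'_le _ _ _ fun x hx => by
      rcases mem_insert.1 hx with rfl | hx
      exacts [hξ.1, (mem_filter.1 hx).2.le]
  have hge : ξ ≤ rightNeighbor X ξ :=
    le_min' _ _ _ fun x hx => by
      rcases mem_insert.1 hx with rfl | hx
      exacts [hξ.2, (mem_filter.1 hx).2.le]
  rcases hξ.2.lt_or_eq with hξ1 | rfl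
  · have hgt : ξ < rightNeighbor X ξ := (lt_min'_iff _ _).2 fun x hx => by
      rcases mem_insert.1 hx with rfl | hx
      exacts [hξ1, (mem_filter.1 hx).2]
    exact hle.trans_lt hgt
  · have hlt : leftNeighbor X 1 < 1 := (max'_lt_iff _ _).2 fun x hx => by
      rcases mem_insert.1 hx with rfl | hx
      exacts [zero_lt_one, (mem_filter.1 hx).2]
    exact hlt.trans_le hge

lemma eq_of_leftNeighbor_lt_of_lt_rightNeighbor {x : ℝ} (hx : x ∈ X)
    (h₁ : leftNeighbor X ξ < x) (h₂ : x < rightNeighbor X ξ) : x = ξ := by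
  rcases lt_trichotomy x ξ with hlt | heq | hgt
  · exact absurd (le_max' _ x (mem_insert_of_mem (mem_filter.2 ⟨hx, hlt⟩))) h₁.not_ge
  · exact heq
  · exact absurd (min'_le _ x (mem_insert_of_mem (mem_filter.2 ⟨hx, hgt⟩))) h₂.not_ge

lemma sum_rightNeighbor_sub (hX : ∀ x ∈ X, x ≤ 1) :
    ∑ ξ ∈ X, (rightNeighbor X ξ - ξ) = 1 - (insert 1 X).min' (insert_nonempty _ _) := by
  induction X using Finset.induction_on_min with
  | empty => simp
  | insert a s ha ih =>
    have haS : a ∉ s := fun h => lt_irrefl a (ha a h)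
    have hrest : ∀ ξ ∈ s, rightNeighbor (insert a s) ξ = rightNeighbor s ξ := by
      intro ξ hξ
      simp only [rightNeighbor, filter_insert, (ha ξ hξ).not_gt, if_false]
    have hfirst : rightNeighbor (insert a s) a = (insert 1 s).min' (insert_nonempty _ _) := by
      simp only [rightNeighbor, filter_insert, lt_irrefl, if_false,
        filter_true_of_mem fun x hx => ha x hx]
    have hmin : (insert 1 (insert a s)).min' (insert_nonempty _ _) = a :=
      le_antisymm (min'_le _ _ (by simp)) (le_min' _ _ _ fun x hx => by
        simp only [mem_insert] at hx
        rcases hx with rfl | rfl | hx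
        exacts [hX a (mem_insert_self _ _), le_rfl, (ha x hx).le])
    rw [sum_insert haS, sum_congr rfl fun ξ hξ => by rw [hrest ξ hξ],
      ih fun x hx => hX x (mem_insert_of_mem hx), hfirst, hmin]
    ring

lemma sum_sub_leftNeighbor (hX : ∀ x ∈ X, 0 ≤ x) :
    ∑ ξ ∈ X, (ξ - leftNeighbor X ξ) = (insert 0 X).max' (insert_nonempty _ _) := by
  induction X using Finset.induction_on_max with
  | empty => simp
  | insert a s ha ih =>
    have haS : a ∉ s := fun h => lt_irrefl a (ha a h)
    have hrest : ∀ ξ ∈ s, leftNeighbor (insert a s) ξ = leftNeighbor s ξ := by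
      intro ξ hξ
      simp only [leftNeighbor, filter_insert, (ha ξ hξ).not_gt, if_false]
    have hlast : leftNeighbor (insert a s) a = (insert 0 s).max' (insert_nonempty _ _) := by
      simp only [leftNeighbor, filter_insert, lt_irrefl, if_false,
        filter_true_of_mem fun x hx => ha x hx]
    have hmax : (insert 0 (insert a s)).max' (insert_nonempty _ _) = a :=
      le_antisymm (max'_le _ _ _ fun x hx => by
        simp only [mem_insert] at hx
        rcases hx with rfl | rfl | hx
        exacts [hX a (mem_insert_self _ _), le_rfl, (ha x hx).le]) (le_max' _ _ (by simp))
    rw [sum_insert haS, sum_congr rfl fun ξ hξ => by rw [hrest ξ hξ],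
      ih fun x hx => hX x (mem_insert_of_mem hx), hlast, hmax]
    ring

end Neighbors

def MeetsLargeRectangles (S : Finset (ℝ × ℝ)) (T : ℝ) : Prop :=
  ∀ a b c d : ℝ, 0 ≤ a → a < b → b ≤ 1 → 0 ≤ c → c < d → d ≤ 1 → T ≤ (b - a) * (d - c) →
    ∃ p ∈ S, a < p.1 ∧ p.1 < b ∧ c < p.2 ∧ p.2 < d

noncomputable def column (S : Finset (ℝ × ℝ)) (ξ : ℝ) : Finset ℝ :=
  {p ∈ S | p.1 = ξ}.image Prod.snd

lemma sum_sum_column (S : Finset (ℝ × ℝ)) (f : ℝ → ℝ) :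
    ∑ ξ ∈ S.image Prod.fst, ∑ y ∈ column S ξ, f y = ∑ p ∈ S, f p.2 := by
  rw [← sum_fiberwise_of_maps_to (g := Prod.fst) fun p hp => mem_image_of_mem _ hp]
  refine sum_congr rfl fun ξ _ => sum_image fun p hp q hq hpq => ?_
  simp only [mem_coe, mem_filter] at hp hq
  exact Prod.ext (hp.2.trans hq.2.symm) hpq

lemma sum_card_column (S : Finset (ℝ × ℝ)) :
    ∑ ξ ∈ S.image Prod.fst, (#(column S ξ) : ℝ) = #S := by
  simpa using sum_sum_column S fun _ => 1

namespace MeetsLargeRectangles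

variable {S : Finset (ℝ × ℝ)} {T : ℝ}

lemma meetsLongIntervals_image_snd (h : MeetsLargeRectangles S T) (hT : 0 < T) :
    MeetsLongIntervals (S.image Prod.snd) T := by
  intro c d hc hd hlen
  obtain ⟨p, hp, -, -, hcp, hpd⟩ :=
    h 0 1 c d le_rfl one_pos le_rfl hc (by linarith) hd (by linarith)
  exact ⟨p.2, mem_image_of_mem _ hp, hcp, hpd⟩

lemma meetsLongIntervals_column (h : MeetsLargeRectangles S T) (hT : 0 < T) {ξ : ℝ}
    (hξ : ξ ∈ Set.Icc (0 : ℝ) 1) :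
    MeetsLongIntervals (column S ξ) (T / (rightNeighbor (S.image Prod.fst) ξ -
      leftNeighbor (S.image Prod.fst) ξ)) := by
  set X := S.image Prod.fst
  have hw : 0 < rightNeighbor X ξ - leftNeighbor X ξ :=
    sub_pos.2 (leftNeighbor_lt_rightNeighbor hξ)
  intro c d hc hd hlen
  have hlen' : 0 < d - c := lt_of_lt_of_le (by positivity) hlen
  rw [div_le_iff₀ hw] at hlen
  obtain ⟨p, hp, h₁, h₂, hcp, hpd⟩ := h _ _ c d leftNeighbor_nonneg (sub_pos.1 hw)
    rightNeighbor_le_one hc (by linarith) hd (by linarith)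
  have hpξ : p.1 = ξ := eq_of_leftNeighbor_lt_of_lt_rightNeighbor (mem_image_of_mem _ hp) h₁ h₂
  exact ⟨p.2, mem_image_of_mem _ (mem_filter.2 ⟨hp, hpξ⟩), hcp, hpd⟩

lemma width_le (h : MeetsLargeRectangles S T) (hT : 0 < T)
    (hS : ∀ p ∈ S, p.1 ∈ Set.Icc (0 : ℝ) 1 ∧ p.2 ∈ Set.Icc (0 : ℝ) 1) {ξ : ℝ}
    (hξ : ξ ∈ S.image Prod.fst) :
    rightNeighbor (S.image Prod.fst) ξ - leftNeighbor (S.image Prod.fst) ξ ≤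
      T * (2 * #(column S ξ) - 2 * ∑ y ∈ column S ξ, |y - 1 / 2|) := by
  obtain ⟨p, hp, rfl⟩ := mem_image.1 hξ
  have hne : (column S p.1).Nonempty := ⟨p.2, mem_image_of_mem _ (mem_filter.2 ⟨hp, rfl⟩)⟩
  have hcol01 : ∀ y ∈ column S p.1, y ∈ Set.Icc (0 : ℝ) 1 := by
    intro y hy
    obtain ⟨q, hq, rfl⟩ := mem_image.1 hy
    exact (hS q (mem_filter.1 hq).1).2
  have hcol := (h.meetsLongIntervals_column hT (hS p hp).1).inv_add_two_mul_sum_abs_le hne hcol01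
  rw [one_div_div, div_add' _ _ _ hT.ne', div_le_iff₀ hT] at hcol
  linarith

lemma min'_lt (h : MeetsLargeRectangles S T) (hT : 0 < T) :
    (insert 1 (S.image Prod.fst)).min' (insert_nonempty _ _) < T := by
  set m := (insert 1 (S.image Prod.fst)).min' (insert_nonempty _ _)
  by_contra! hm
  obtain ⟨p, hp, -, hpm, -⟩ := h 0 m 0 1 le_rfl (hT.trans_le hm)
    (min'_le _ _ (mem_insert_self _ _)) le_rfl one_pos le_rfl (by linarith)
  exact hpm.not_ge (min'_le _ _ (mem_insert_of_mem (mem_image_of_mem _ hp)))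

lemma one_sub_max'_lt (h : MeetsLargeRectangles S T) (hT : 0 < T) :
    1 - (insert 0 (S.image Prod.fst)).max' (insert_nonempty _ _) < T := by
  set M := (insert 0 (S.image Prod.fst)).max' (insert_nonempty _ _)
  by_contra! hM
  obtain ⟨p, hp, hMp, -⟩ := h M 1 0 1 (le_max' _ _ (mem_insert_self _ _)) (by linarith) le_rfl
    le_rfl one_pos le_rfl (by linarith)
  exact hMp.not_ge (le_max' _ _ (mem_insert_of_mem (mem_image_of_mem _ hp)))

theorem five_halves_lt (h : MeetsLargeRectangles S T) (hT : 0 < T)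
    (hS : ∀ p ∈ S, p.1 ∈ Set.Icc (0 : ℝ) 1 ∧ p.2 ∈ Set.Icc (0 : ℝ) 1) :
    5 / 2 < T * (2 * #S + 5) := by
  set X := S.image Prod.fst
  set D := ∑ p ∈ S, |p.2 - 1 / 2|
  have hwidths : 2 - 2 * T < ∑ ξ ∈ X, (rightNeighbor X ξ - leftNeighbor X ξ) := by
    have hsplit : ∑ ξ ∈ X, (rightNeighbor X ξ - leftNeighbor X ξ) =
        ∑ ξ ∈ X, (rightNeighbor X ξ - ξ) + ∑ ξ ∈ X, (ξ - leftNeighbor X ξ) := by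
      rw [← sum_add_distrib]
      exact sum_congr rfl fun _ _ => by ring
    have hX : ∀ x ∈ X, x ∈ Set.Icc (0 : ℝ) 1 := fun x hx => by
      obtain ⟨p, hp, rfl⟩ := mem_image.1 hx
      exact (hS p hp).1
    rw [hsplit, sum_rightNeighbor_sub fun x hx => (hX x hx).2,
      sum_sub_leftNeighbor fun x hx => (hX x hx).1]
    linarith [h.min'_lt hT, h.one_sub_max'_lt hT]
  have hcolumns : ∑ ξ ∈ X, (rightNeighbor X ξ - leftNeighbor X ξ) ≤ T * (2 * #S - 2 * D) :=
    calc ∑ ξ ∈ X, (rightNeighbor X ξ - leftNeighbor X ξ)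
        ≤ ∑ ξ ∈ X, T * (2 * #(column S ξ) - 2 * ∑ y ∈ column S ξ, |y - 1 / 2|) :=
          sum_le_sum fun ξ hξ => h.width_le hT hS hξ
      _ = T * (2 * #S - 2 * D) := by
          rw [← mul_sum, sum_sub_distrib, ← mul_sum, ← mul_sum, sum_card_column, sum_sum_column]
  have hD : 1 / (4 * T) - 3 / 2 ≤ D :=
    (h.meetsLongIntervals_image_snd hT).sum_abs_sub_half_ge.trans
      (sum_image_le_of_nonneg fun _ _ => abs_nonneg _)
  have hquarter : T * (1 / (4 * T)) = 1 / 4 := by field_simp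
  nlinarith

end MeetsLargeRectangles

/-- Any `n` points in the unit square admit an empty open axis-parallel
rectangle of area at least `(5/4)·1/(n+5)`. -/
theorem stmt_6 (n : ℕ) (S : Finset (ℝ × ℝ)) (hcard : S.card = n)
    (hS : ∀ p ∈ S, p.1 ∈ Set.Icc (0:ℝ) 1 ∧ p.2 ∈ Set.Icc (0:ℝ) 1) :
    ∃ a b c d : ℝ, 0 ≤ a ∧ a < b ∧ b ≤ 1 ∧ 0 ≤ c ∧ c < d ∧ d ≤ 1 ∧
      (∀ p ∈ S, ¬ (a < p.1 ∧ p.1 < b ∧ c < p.2 ∧ p.2 < d)) ∧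
      (5 / 4) * (1 / ((n : ℝ) + 5)) ≤ (b - a) * (d - c) := by
  set T : ℝ := 5 / 4 * (1 / ((n : ℝ) + 5))
  by_contra! hsmall
  have hT : 0 < T := by positivity
  have hmeets : MeetsLargeRectangles S T := by
    intro a b c d ha hab hb hc hcd hd harea
    by_contra! hempty
    exact (hsmall a b c d ha hab hb hc hcd hd hempty).not_ge harea
  have := hmeets.five_halves_lt hT hS
  rw [hcard] at this
  have hT' : T * (4 * ((n : ℝ) + 5)) = 5 := by simp only [T]; field_simp
  nlinarith
end

section
/- Let C_n ⊂ [0,1]^2 be the van der Corput set of n points: for 0 ≤ k ≤ n-1, the k-th point is (k/n, Σ_{j≥0} a_j 2^{-j-1}), where k = Σ_{j≥0} a_j 2^j is the binary representation of k with a_j ∈ {0,1}. Then every open axis-parallel rectangle contained in [0,1]^2 that contains no point of C_n has area less than 4/n. -/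
/-!
Take `m` with `2 ≤ 2^m (d - c) < 4`. The first `m` binary digits of `k` reversed give the index
`bitRev m k` of the dyadic cell of length `2^{-m}` containing `vdcY k`, and this index depends only
on `k mod 2^m` and runs over all cells as `k` does. Since `d - c ≥ 2 · 2^{-m}`, some cell lies in
`(c, d)`, so a whole residue class `k ≡ r (mod 2^m)` has its heights in `(c, d)`. The abscissae
`k / n` of that class form a progression of step `2^m / n`, so an empty rectangle has
`b - a ≤ 2^m / n`, and the area is `< (2^m / n) (4 / 2^m) = 4 / n`.
-/

/-- The binary bit-reversal (van der Corput) map: `k = Σ a_j 2^j ↦ Σ a_j 2^{-j-1}`.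
All binary digits of `k` of index `≥ k` vanish, so summing over `range k` suffices. -/
noncomputable def vdcY (k : ℕ) : ℝ :=
  ∑ j ∈ Finset.range k, ((k / 2 ^ j % 2 : ℕ) : ℝ) * ((2:ℝ)⁻¹) ^ (j + 1)

open Finset

lemma vdcY_eq_sum_range {k M : ℕ} (h : k ≤ M) :
    vdcY k = ∑ j ∈ range M, ((k / 2 ^ j % 2 : ℕ) : ℝ) * ((2:ℝ)⁻¹) ^ (j + 1) := by
  refine sum_subset (range_subset_range.2 h) fun j _ hj => ?_
  have hkj : k < 2 ^ j :=
    k.lt_two_pow_self.trans_le (Nat.pow_le_pow_right two_pos (not_lt.1 (mem_range.not.1 hj)))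
  simp [Nat.div_eq_of_lt hkj]

lemma vdcY_eq_half (k : ℕ) : vdcY k = ((k % 2 : ℕ) + vdcY (k / 2)) / 2 := by
  rw [vdcY_eq_sum_range k.le_succ, vdcY_eq_sum_range (k.div_le_self 2), sum_range_succ', add_comm,
    add_div, sum_div]
  congr 1
  · simp [div_eq_mul_inv]
  · refine sum_congr rfl fun j _ => ?_
    rw [pow_succ', Nat.div_div_eq_div_mul, pow_succ _ (j + 1)]
    ring

lemma vdcY_nonneg (k : ℕ) : 0 ≤ vdcY k :=
  sum_nonneg fun _ _ => by positivity

lemma vdcY_lt_one (k : ℕ) : vdcY k < 1 := by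
  induction k using Nat.strong_induction_on with
  | _ k ih =>
    rcases k.eq_zero_or_pos with rfl | hk
    · simp [vdcY]
    · have hdigit : ((k % 2 : ℕ) : ℝ) ≤ 1 := by exact_mod_cast Nat.le_of_lt_succ (k.mod_lt two_pos)
      rw [vdcY_eq_half]
      linarith [ih (k / 2) (Nat.div_lt_self hk one_lt_two)]

def bitRev : ℕ → ℕ → ℕ
  | 0, _ => 0
  | m + 1, k => k % 2 * 2 ^ m + bitRev m (k / 2)

lemma two_pow_mul_vdcY (m k : ℕ) : (2:ℝ) ^ m * vdcY k = bitRev m k + vdcY (k / 2 ^ m) := by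
  induction m generalizing k with
  | zero => simp [bitRev]
  | succ m ih =>
    rw [pow_succ, mul_assoc, vdcY_eq_half, mul_div_cancel₀ _ two_ne_zero, mul_add, ih,
      pow_succ', ← Nat.div_div_eq_div_mul, bitRev]
    push_cast
    ring

lemma bitRev_lt (m k : ℕ) : bitRev m k < 2 ^ m := by
  induction m generalizing k with
  | zero => simp [bitRev]
  | succ m ih =>
    have := ih (k / 2)
    have := Nat.mul_le_mul_right (2 ^ m) (show k % 2 ≤ 1 by omega)
    rw [bitRev, pow_succ]
    omega

lemma bitRev_mod (m k : ℕ) : bitRev m (k % 2 ^ m) = bitRev m k := by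
  induction m generalizing k with
  | zero => simp [bitRev]
  | succ m ih =>
    have hlow : k % 2 ^ (m + 1) % 2 = k % 2 := Nat.mod_mod_of_dvd _ (dvd_pow_self 2 m.succ_ne_zero)
    have hhigh : k % 2 ^ (m + 1) / 2 = k / 2 % 2 ^ m := by
      rw [pow_succ']
      exact Nat.mod_mul_right_div_self k 2 (2 ^ m)
    rw [bitRev, bitRev, hlow, hhigh, ih]

lemma bitRev_injOn (m : ℕ) : Set.InjOn (bitRev m) (Set.Iio (2 ^ m)) := by
  induction m with
  | zero => intro k hk k' hk' _; simp_all
  | succ m ih =>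
    intro k hk k' hk' h
    simp only [Set.mem_Iio, pow_succ] at hk hk'
    have := bitRev_lt m (k / 2)
    have := bitRev_lt m (k' / 2)
    have hlow : k % 2 = k' % 2 := by
      simp only [bitRev] at h
      rcases Nat.mod_two_eq_zero_or_one k with h0 | h0 <;>
        rcases Nat.mod_two_eq_zero_or_one k' with h0' | h0' <;>
        simp only [h0, h0', zero_mul, one_mul] at h ⊢ <;> omega
    have hhigh : k / 2 = k' / 2 := by
      refine ih (by simp only [Set.mem_Iio]; omega) (by simp only [Set.mem_Iio]; omega) ?_
      simpa [bitRev, hlow] using h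
    omega

lemma bitRev_surjOn (m : ℕ) : Set.SurjOn (bitRev m) (Set.Iio (2 ^ m)) (Set.Iio (2 ^ m)) :=
  ((Set.finite_Iio _).injOn_iff_bijOn_of_mapsTo fun k _ => bitRev_lt m k).1 (bitRev_injOn m)
    |>.surjOn

lemma exists_forall_mod_eq_vdcY_mem_Ioo {m : ℕ} {c d : ℝ} (hc : 0 ≤ c) (hd : d ≤ 1)
    (hcd : 2 ≤ 2 ^ m * (d - c)) :
    ∃ r < 2 ^ m, ∀ k, k % 2 ^ m = r → vdcY k ∈ Set.Ioo c d := by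
  have hpow : (0:ℝ) < 2 ^ m := by positivity
  set s := ⌊(2:ℝ) ^ m * c⌋₊ + 1
  have hcs : (2:ℝ) ^ m * c < s := by
    simpa [s] using Nat.lt_floor_add_one ((2:ℝ) ^ m * c)
  have hsc : (s:ℝ) ≤ 2 ^ m * c + 1 := by
    simpa [s] using Nat.floor_le (by positivity : (0:ℝ) ≤ 2 ^ m * c)
  have hs : s < 2 ^ m := by
    have : (s:ℝ) < 2 ^ m := by nlinarith
    exact_mod_cast this
  obtain ⟨r, hr, hrs⟩ := bitRev_surjOn m hs
  refine ⟨r, hr, fun k hk => ?_⟩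
  have hcell := two_pow_mul_vdcY m k
  rw [← bitRev_mod, hk, hrs] at hcell
  have := vdcY_nonneg (k / 2 ^ m)
  have := vdcY_lt_one (k / 2 ^ m)
  constructor <;> exact lt_of_mul_lt_mul_left (by linarith) hpow.le

lemma exists_mod_eq_mem_Ioo {u v : ℝ} (hu : 0 ≤ u) {q r : ℕ} (hr : r < q) (huv : u + q < v) :
    ∃ k : ℕ, k % q = r ∧ u < k ∧ (k:ℝ) < v := by
  have hrq : (r:ℝ) < q := by exact_mod_cast hr
  rcases lt_or_ge u r with hur | hru
  · exact ⟨r, Nat.mod_eq_of_lt hr, hur, by linarith⟩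
  · have hq : (0:ℝ) < q := r.cast_nonneg.trans_lt hrq
    set j := ⌊(u - r) / q⌋₊
    have hj : (j:ℝ) * q ≤ u - r :=
      (le_div_iff₀ hq).1 (Nat.floor_le (div_nonneg (sub_nonneg.2 hru) hq.le))
    have hj' : u - r < (j + 1) * q := (div_lt_iff₀ hq).1 (Nat.lt_floor_add_one _)
    refine ⟨r + (j + 1) * q, by rw [Nat.add_mul_mod_self_right, Nat.mod_eq_of_lt hr], ?_, ?_⟩ <;>
      push_cast <;> linarith

lemma exists_two_le_two_pow_mul_lt_four {x : ℝ} (hx0 : 0 < x) (hx : x < 2) :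
    ∃ m : ℕ, 2 ≤ 2 ^ m * x ∧ 2 ^ m * x < 4 := by
  classical
  have hex : ∃ m : ℕ, 2 ≤ 2 ^ m * x := by
    obtain ⟨m, hm⟩ := pow_unbounded_of_one_lt (2 / x) one_lt_two
    exact ⟨m, ((div_lt_iff₀ hx0).1 hm).le⟩
  obtain ⟨m, hm⟩ : ∃ m, Nat.find hex = m + 1 :=
    Nat.exists_eq_succ_of_ne_zero fun h => by linarith [h ▸ Nat.find_spec hex, pow_zero (2:ℝ)]
  have hmin : ¬ 2 ≤ 2 ^ m * x := Nat.find_min hex (hm ▸ m.lt_succ_self)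
  exact ⟨m + 1, hm ▸ Nat.find_spec hex, by rw [pow_succ]; linarith⟩

theorem stmt_8_general (n : ℕ) (hn : 1 ≤ n)
    (a b c d : ℝ) (ha : 0 ≤ a) (hb : b ≤ 1)
    (hc : 0 ≤ c) (hcd : c < d) (hd : d ≤ 1)
    (hempty : ∀ k < n,
      ¬ (a < (k : ℝ) / n ∧ (k : ℝ) / n < b ∧ c < vdcY k ∧ vdcY k < d)) :
    (b - a) * (d - c) < 4 / n := by
  have hn0 : (0:ℝ) < n := by exact_mod_cast hn
  obtain ⟨m, hm2, hm4⟩ := exists_two_le_two_pow_mul_lt_four (sub_pos.2 hcd) (by linarith)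
  obtain ⟨r, hr, hy⟩ := exists_forall_mod_eq_vdcY_mem_Ioo hc hd hm2
  have hx : b - a ≤ 2 ^ m / n := by
    by_contra! hgap
    obtain ⟨k, hkr, hak, hkb⟩ := exists_mod_eq_mem_Ioo (u := a * n) (v := b * n) (by positivity) hr
      (by push_cast; linarith [(div_lt_iff₀ hn0).1 hgap])
    have hkn : k < n := by exact_mod_cast hkb.trans_le (by nlinarith : b * n ≤ n)
    exact hempty k hkn ⟨(lt_div_iff₀ hn0).2 hak, (div_lt_iff₀ hn0).2 hkb, hy k hkr⟩
  calc (b - a) * (d - c) ≤ 2 ^ m / n * (d - c) := by gcongr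
    _ < 2 ^ m / n * (4 / 2 ^ m) := by gcongr; rwa [lt_div_iff₀ (by positivity), mul_comm]
    _ = 4 / n := by field_simp

/-- Every open axis-parallel rectangle in the unit square containing no point
of the van der Corput set `C_n = {(k/n, y(k)) : 0 ≤ k ≤ n-1}` has area `< 4/n`. -/
theorem stmt_8 (n : ℕ) (hn : 1 ≤ n)
    (a b c d : ℝ) (ha : 0 ≤ a) (hab : a < b) (hb : b ≤ 1)
    (hc : 0 ≤ c) (hcd : c < d) (hd : d ≤ 1)
    (hempty : ∀ k < n,
      ¬ (a < (k : ℝ) / n ∧ (k : ℝ) / n < b ∧ c < vdcY k ∧ vdcY k < d)) :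
    (b - a) * (d - c) < 4 / n :=
  stmt_8_general n hn a b c d ha hb hc hcd hd hempty
end

section
/- Let d ≥ 2 and let p_1 < p_2 < ... < p_{d-1} be the first d-1 primes. Let H_n ⊂ [0,1]^d be the Halton–Hammersley set of n points: for 0 ≤ k ≤ n-1, the k-th point has coordinates (k/n, x_1(k), ..., x_{d-1}(k)) where x_i(k) = Σ_{j≥0} a_{i,j} p_i^{-j-1} and k = Σ_{j≥0} a_{i,j} p_i^j is the base-p_i representation of k. Then every open axis-parallel box contained in [0,1]^d containing no point of H_n has volume less than (2^{d-1} ∏_{i=1}^{d-1} p_i)/n. -/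
/-- The radical-inverse map in base `p`:
`k = Σ a_j p^j ↦ Σ a_j p^{-j-1}`. Since `p ≥ 2`, all base-`p` digits of `k`
of index `≥ k` vanish, so summing over `range k` suffices. -/
noncomputable def radInv (p k : ℕ) : ℝ :=
  ∑ j ∈ Finset.range k, ((k / p ^ j % p : ℕ) : ℝ) * ((p:ℝ)⁻¹) ^ (j + 1)

/-- The `k`-th point of the Halton–Hammersley set of `n` points in `[0,1]^d`:
first coordinate `k/n`, and `i`-th coordinate (for `1 ≤ i ≤ d-1`) the
radical inverse of `k` in base the `i`-th prime. -/
noncomputable def halton (d n k : ℕ) : Fin d → ℝ := fun i =>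
  if (i : ℕ) = 0 then (k : ℝ) / n else radInv (Nat.nth Nat.Prime ((i : ℕ) - 1)) k

/-!
For a radical-inverse coordinate with prime `p`, the side `(a_i, b_i)` contains a `p`-adic
interval `[c / p^t, (c + 1) / p^t)` with `p^t (b_i - a_i) < 2p`, and since the first `t` digits of
`radInv p k` are the last `t` base-`p` digits of `k` reversed, all `k` in one residue class
mod `p^t` land in it. By the Chinese remainder theorem, for one residue class of `k`
mod `M = ∏ p_i^{t_i}` the point `k` lies in the box in every coordinate but the first, so
emptiness makes `(n a_0, n b_0)` miss that class, whence `b_0 - a_0 ≤ M / n`. The volume is then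
at most `∏ p_i^{t_i} (b_i - a_i) / n < 2^{d-1} ∏ p_i / n`.
-/

namespace Halton

def digitRev (p t m : ℕ) : ℕ := ∑ j ∈ Finset.range t, m / p ^ j % p * p ^ (t - 1 - j)

theorem digitRev_succ (p t m : ℕ) :
    digitRev p (t + 1) m = m % p * p ^ t + digitRev p t (m / p) := by
  rw [digitRev, Finset.sum_range_succ', add_comm]
  congr 1
  · simp
  · refine Finset.sum_congr rfl fun j _ => ?_
    rw [pow_succ', ← Nat.div_div_eq_div_mul, Nat.add_sub_cancel, Nat.sub_sub, Nat.add_comm 1 j]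

theorem digitRev_succ' (p t m : ℕ) :
    digitRev p (t + 1) m = m / p ^ t % p + p * digitRev p t m := by
  rw [digitRev, Finset.sum_range_succ, add_comm, digitRev, Finset.mul_sum]
  congr 1
  · simp
  · refine Finset.sum_congr rfl fun j hj => ?_
    rw [mul_left_comm, ← pow_succ']
    congr 2
    have := Finset.mem_range.1 hj
    omega

theorem digitRev_lt {p : ℕ} (hp : 0 < p) (t m : ℕ) : digitRev p t m < p ^ t := by
  induction t generalizing m with
  | zero => simp [digitRev]
  | succ t ih =>
    rw [digitRev_succ, pow_succ']
    calc m % p * p ^ t + digitRev p t (m / p) < (m % p + 1) * p ^ t := by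
          linarith [ih (m / p)]
      _ ≤ p * p ^ t := Nat.mul_le_mul_right _ (Nat.mod_lt _ hp)

theorem div_pow_mod_of_lt {p t j : ℕ} (k : ℕ) (hj : j < t) :
    k % p ^ t / p ^ j % p = k / p ^ j % p := by
  rw [show t = j + (t - j) by omega, pow_add, Nat.mod_mul_right_div_self,
    Nat.mod_mod_of_dvd _ (dvd_pow_self p (by omega))]

theorem digitRev_mod_pow (p t m : ℕ) : digitRev p t (m % p ^ t) = digitRev p t m :=
  Finset.sum_congr rfl fun j hj => by rw [div_pow_mod_of_lt m (Finset.mem_range.1 hj)]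

theorem digitRev_digitRev {p : ℕ} (hp : 0 < p) {t m : ℕ} (hm : m < p ^ t) :
    digitRev p t (digitRev p t m) = m := by
  induction t generalizing m with
  | zero => simp_all [digitRev]
  | succ t ih =>
    have hrev := digitRev_lt hp t (m / p)
    have hdiv : m / p < p ^ t := Nat.div_lt_of_lt_mul (by rwa [pow_succ'] at hm)
    have hhigh : (m % p * p ^ t + digitRev p t (m / p)) / p ^ t % p = m % p := by
      rw [mul_comm, Nat.mul_add_div (by positivity), Nat.div_eq_of_lt hrev, Nat.add_zero,
        Nat.mod_eq_of_lt (Nat.mod_lt _ hp)]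
    have hlow : digitRev p t (m % p * p ^ t + digitRev p t (m / p)) = m / p := by
      rw [← digitRev_mod_pow, Nat.mul_add_mod_self_right, Nat.mod_eq_of_lt hrev, ih hdiv]
    rw [digitRev_succ p t m, digitRev_succ', hhigh, hlow, Nat.mod_add_div]

theorem radInv_eq_sum_range_of_le {p : ℕ} (hp : 1 < p) {k m : ℕ} (hkm : k ≤ m) :
    radInv p k =
      ∑ j ∈ Finset.range m, ((k / p ^ j % p : ℕ) : ℝ) * ((p : ℝ)⁻¹) ^ (j + 1) := by
  refine Finset.sum_subset (Finset.range_subset_range.2 hkm) fun j _ hj => ?_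
  have hk : k < p ^ j := (not_lt.1 (Finset.mem_range.not.1 hj)).trans_lt (Nat.lt_pow_self hp)
  simp [Nat.div_eq_of_lt hk]

theorem radInv_nonneg (p k : ℕ) : 0 ≤ radInv p k :=
  Finset.sum_nonneg fun _ _ => by positivity

theorem radInv_eq_digitRev_add {p : ℕ} (hp : 1 < p) (t k : ℕ) :
    radInv p k = (digitRev p t (k % p ^ t) + radInv p (k / p ^ t)) / (p : ℝ) ^ t := by
  rw [radInv_eq_sum_range_of_le hp (Nat.le_add_left k t), Finset.sum_range_add, add_div,
    radInv_eq_sum_range_of_le hp (Nat.div_le_self k (p ^ t)), digitRev, Nat.cast_sum,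
    Finset.sum_div, Finset.sum_div]
  congr 1
  · refine Finset.sum_congr rfl fun j hj => ?_
    have hj := Finset.mem_range.1 hj
    have ht : (p : ℝ) ^ t = p ^ (t - 1 - j) * p ^ (j + 1) := by
      rw [← pow_add]; congr 1; omega
    rw [div_pow_mod_of_lt k hj, ht, inv_pow]
    push_cast
    field_simp
  · refine Finset.sum_congr rfl fun j _ => ?_
    rw [Nat.div_div_eq_div_mul, ← pow_add, add_assoc, pow_add, inv_pow, inv_pow]
    field_simp
    ring

theorem radInv_lt_one {p : ℕ} (hp : 1 < p) (k : ℕ) : radInv p k < 1 := by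
  have hk : k < p ^ k := Nat.lt_pow_self hp
  rw [radInv_eq_digitRev_add hp k k, Nat.mod_eq_of_lt hk, Nat.div_eq_of_lt hk,
    div_lt_one (by positivity), radInv, Finset.sum_range_zero, add_zero]
  exact_mod_cast digitRev_lt (by omega) k k

theorem radInv_mem_Ico {p : ℕ} (hp : 1 < p) {t c k : ℕ} (hc : c < p ^ t)
    (hk : k % p ^ t = digitRev p t c) :
    radInv p k ∈ Set.Ico ((c : ℝ) / p ^ t) ((c + 1) / p ^ t) := by
  rw [radInv_eq_digitRev_add hp t k, hk, digitRev_digitRev (by omega) hc]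
  have hpt : (0 : ℝ) < (p : ℝ) ^ t := by positivity
  exact ⟨div_le_div_of_nonneg_right (by linarith [radInv_nonneg p (k / p ^ t)]) hpt.le,
    div_lt_div_of_pos_right (by linarith [radInv_lt_one hp (k / p ^ t)]) hpt⟩

theorem exists_le_mul_pow_lt {p L C : ℝ} (hp : 1 < p) (hL : 0 < L) (hLC : L < C) :
    ∃ t : ℕ, C ≤ L * p ^ t ∧ L * p ^ t < C * p := by
  have hex : ∃ t : ℕ, C ≤ L * p ^ t := by
    obtain ⟨t, ht⟩ := pow_unbounded_of_one_lt (C / L) hp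
    exact ⟨t, ((div_lt_iff₀' hL).1 ht).le⟩
  have ht0 : Nat.find hex ≠ 0 := fun h => by
    have := Nat.find_spec hex
    rw [h, pow_zero, mul_one] at this
    linarith
  obtain ⟨t, ht⟩ := Nat.exists_eq_add_one_of_ne_zero ht0
  have hmin : L * p ^ t < C := not_le.1 (Nat.find_min hex (by omega))
  refine ⟨t + 1, ht ▸ Nat.find_spec hex, ?_⟩
  rw [pow_succ, ← mul_assoc]
  gcongr

theorem exists_nat_btwn_of_add_two_le {x y : ℝ} (hx : 0 ≤ x) (hxy : x + 2 ≤ y) :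
    ∃ c : ℕ, x < c ∧ (c : ℝ) + 1 ≤ y := by
  refine ⟨⌊x⌋₊ + 1, ?_, ?_⟩ <;> push_cast
  · exact Nat.lt_floor_add_one x
  · linarith [Nat.floor_le hx]

theorem exists_modEq_radInv_mem_Ioo {p : ℕ} (hp : 1 < p) {A B : ℝ} (hA : 0 ≤ A)
    (hAB : A < B) (hB : B ≤ 1) :
    ∃ t r : ℕ, (B - A) * p ^ t < 2 * p ∧
      ∀ k, k ≡ r [MOD p ^ t] → radInv p k ∈ Set.Ioo A B := by
  have hp' : (1 : ℝ) < p := by exact_mod_cast hp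
  obtain ⟨t, hlen2, hlen⟩ := exists_le_mul_pow_lt hp' (sub_pos.2 hAB) (by linarith : B - A < 2)
  have hpt : (0 : ℝ) < (p : ℝ) ^ t := by positivity
  obtain ⟨c, hAc, hcB⟩ := exists_nat_btwn_of_add_two_le (by positivity : 0 ≤ A * p ^ t)
    (by linarith : A * p ^ t + 2 ≤ B * p ^ t)
  have hc : c < p ^ t := by
    have : (c : ℝ) < p ^ t := by nlinarith
    exact_mod_cast this
  refine ⟨t, digitRev p t c, hlen, fun k hk => ?_⟩
  have hk' : k % p ^ t = digitRev p t c := by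
    rw [hk, Nat.mod_eq_of_lt (digitRev_lt (by omega) t c)]
  obtain ⟨hlo, hhi⟩ := radInv_mem_Ico hp hc hk'
  exact ⟨(lt_div_iff₀ hpt).2 hAc |>.trans_le hlo, hhi.trans_le ((div_le_iff₀ hpt).2 hcB)⟩

theorem exists_forall_modEq_prod {ι : Type*} (S : Finset ι) (r q : ι → ℕ)
    (hq : ∀ i ∈ S, q i ≠ 0) (hco : (S : Set ι).Pairwise (Function.onFun Nat.Coprime q)) :
    ∃ s, ∀ k, k ≡ s [MOD ∏ i ∈ S, q i] → ∀ i ∈ S, k ≡ r i [MOD q i] := by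
  obtain ⟨s, hs⟩ := Nat.chineseRemainderOfFinset r q S hq hco
  exact ⟨s, fun k hk i hi => (hk.of_dvd (Finset.dvd_prod_of_mem q hi)).trans (hs i hi)⟩

theorem sub_le_of_forall_modEq_notMem_Ioo {u v : ℝ} (hu : 0 ≤ u) {M s : ℕ} (hM : 0 < M)
    (h : ∀ k : ℕ, k ≡ s [MOD M] → (k : ℝ) ∉ Set.Ioo u v) : v - u ≤ M := by
  by_contra! hlong
  have hex : ∃ j : ℕ, u < (s % M + M * j : ℕ) := by
    obtain ⟨j, hj⟩ := exists_nat_gt u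
    refine ⟨j, hj.trans_le ?_⟩
    exact_mod_cast (Nat.le_mul_of_pos_left j hM).trans (Nat.le_add_left _ _)
  set j := Nat.find hex
  refine h (s % M + M * j) ?_ ⟨Nat.find_spec hex, ?_⟩
  · simp [Nat.ModEq, Nat.add_mul_mod_self_left]
  · have hsM : ((s % M : ℕ) : ℝ) < M := by exact_mod_cast Nat.mod_lt s hM
    cases hj : j with
    | zero => push_cast; linarith
    | succ i =>
      have hmin : ((s % M + M * i : ℕ) : ℝ) ≤ u := not_lt.1 (Nat.find_min hex (by omega))
      push_cast at hmin ⊢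
      linarith

@[simp]
theorem halton_zero (m n k : ℕ) : halton (m + 1) n k 0 = k / n := rfl

@[simp]
theorem halton_succ (m n k : ℕ) (j : Fin m) :
    halton (m + 1) n k j.succ = radInv (Nat.nth Nat.Prime j) k := by
  simp [halton]

theorem exists_modEq_halton_succ_mem_Ioo (m n : ℕ) (a b : Fin (m + 1) → ℝ)
    (hab : ∀ i, 0 ≤ a i ∧ a i < b i ∧ b i ≤ 1) :
    ∃ (t : Fin m → ℕ) (s : ℕ),
      (∀ j : Fin m,
        (b j.succ - a j.succ) * (Nat.nth Nat.Prime j : ℝ) ^ t j < 2 * Nat.nth Nat.Prime j) ∧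
      ∀ k, k ≡ s [MOD ∏ j : Fin m, Nat.nth Nat.Prime j ^ t j] →
        ∀ j : Fin m, halton (m + 1) n k j.succ ∈ Set.Ioo (a j.succ) (b j.succ) := by
  choose t r hlen hr using fun j : Fin m =>
    exists_modEq_radInv_mem_Ioo (Nat.prime_nth_prime j).one_lt (hab j.succ).1 (hab j.succ).2.1
      (hab j.succ).2.2
  have hco : ((Finset.univ : Finset (Fin m)) : Set (Fin m)).Pairwise
      (Function.onFun Nat.Coprime fun j => Nat.nth Nat.Prime j ^ t j) := by
    intro i _ j _ hij
    refine Nat.Coprime.pow _ _ ((Nat.coprime_primes (Nat.prime_nth_prime i)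
      (Nat.prime_nth_prime j)).2 fun h => hij ?_)
    exact Fin.ext (Nat.nth_injective Nat.infinite_setOfPred_prime h)
  obtain ⟨s, hs⟩ := exists_forall_modEq_prod Finset.univ r _
    (fun j _ => pow_ne_zero _ (Nat.prime_nth_prime j).ne_zero) hco
  refine ⟨t, s, hlen, fun k hk j => ?_⟩
  simpa using hr j k (hs k hk j (Finset.mem_univ j))

theorem sub_mul_le_of_forall_modEq_halton_succ_mem {m n : ℕ} (hn : 1 ≤ n)
    {a b : Fin (m + 1) → ℝ} (hab : ∀ i, 0 ≤ a i ∧ a i < b i ∧ b i ≤ 1)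
    (hempty : ∀ k < n, ∃ i, ¬ (a i < halton (m + 1) n k i ∧ halton (m + 1) n k i < b i))
    {M s : ℕ} (hM : 0 < M)
    (hmem : ∀ k, k ≡ s [MOD M] →
      ∀ j : Fin m, halton (m + 1) n k j.succ ∈ Set.Ioo (a j.succ) (b j.succ)) :
    (b 0 - a 0) * n ≤ M := by
  have hnR : (0 : ℝ) < n := by exact_mod_cast hn
  rw [sub_mul]
  refine sub_le_of_forall_modEq_notMem_Ioo (s := s) (by nlinarith [(hab 0).1]) hM
    fun k hk hkmem => ?_
  have hkn : k < n := by
    have : (k : ℝ) < n := by nlinarith [hkmem.2, (hab 0).2.2]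
    exact_mod_cast this
  obtain ⟨i, hi⟩ := hempty k hkn
  induction i using Fin.cases with
  | zero =>
    rw [halton_zero, lt_div_iff₀ hnR, div_lt_iff₀ hnR] at hi
    exact hi hkmem
  | succ j => exact hi (hmem k hk j)

end Halton

/-- Every open axis-parallel box in `[0,1]^d` containing no point of the
Halton–Hammersley set of `n` points has volume less than
`(2^{d-1} ∏_{i=1}^{d-1} p_i)/n`, where `p_i` is the `i`-th prime. -/
theorem stmt_10 (d n : ℕ) (hd : 2 ≤ d) (hn : 1 ≤ n)
    (a b : Fin d → ℝ) (hab : ∀ i, 0 ≤ a i ∧ a i < b i ∧ b i ≤ 1)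
    (hempty : ∀ k < n, ∃ i, ¬ (a i < halton d n k i ∧ halton d n k i < b i)) :
    ∏ i, (b i - a i) <
      (2 ^ (d - 1) * ∏ j ∈ Finset.range (d - 1), (Nat.nth Nat.Prime j : ℝ)) / n := by
  obtain ⟨m, rfl⟩ : ∃ m, d = m + 1 := ⟨d - 1, by omega⟩
  have hnR : (0 : ℝ) < n := by exact_mod_cast hn
  set P : ℕ → ℝ := fun j => (Nat.nth Nat.Prime j : ℝ)
  obtain ⟨t, s, hlen, hmem⟩ := Halton.exists_modEq_halton_succ_mem_Ioo m n a b hab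
  have hgap := Halton.sub_mul_le_of_forall_modEq_halton_succ_mem hn hab hempty
    (Finset.prod_pos fun (j : Fin m) _ => pow_pos (Nat.prime_nth_prime j).pos (t j)) hmem
  push_cast at hgap
  have hside : ∀ j : Fin m, 0 < b j.succ - a j.succ := fun j => sub_pos.2 (hab j.succ).2.1
  calc ∏ i, (b i - a i) = (b 0 - a 0) * ∏ j : Fin m, (b j.succ - a j.succ) :=
        Fin.prod_univ_succ _
    _ ≤ (∏ j : Fin m, P j ^ t j) / n * ∏ j : Fin m, (b j.succ - a j.succ) := by
        gcongr
        · exact (Finset.prod_pos fun j _ => hside j).le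
        · exact (le_div_iff₀ hnR).2 hgap
    _ = (∏ j : Fin m, (b j.succ - a j.succ) * P j ^ t j) / n := by
        rw [Finset.prod_mul_distrib]; ring
    _ < (∏ j : Fin m, 2 * P j) / n := by
        gcongr
        refine Finset.prod_lt_prod_of_nonempty (fun j _ => ?_) (fun j _ => hlen j) ?_
        · exact mul_pos (hside j) (pow_pos (by simp [P, (Nat.prime_nth_prime j).pos]) _)
        · exact Finset.univ_nonempty_iff.2 ⟨⟨0, by omega⟩⟩
    _ = _ := by
        rw [Finset.prod_mul_distrib, Finset.prod_const, Finset.card_univ, Fintype.card_fin,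
          Fin.prod_univ_eq_prod_range P m, Nat.add_sub_cancel]
end

section
/- Fix a prime p, a positive integer q, and an integer t with 0 ≤ t < p^q such that t·p^{-q} = Σ_{j=0}^{q-1} b_j p^{-j-1} for digits b_j ∈ {0,...,p-1}. Then for a nonnegative integer k with base-p digits a_j, the radical-inverse value x(k) = Σ_{j≥0} a_j p^{-j-1} satisfies t·p^{-q} ≤ x(k) < (t+1)·p^{-q} if and only if k mod p^q = Σ_{j=0}^{q-1} b_j p^j. -/
open Finset

lemma natCast_le_add_and_add_lt_add_one_iff {n t : ℕ} {y : ℝ} (hy₀ : 0 ≤ y) (hy₁ : y < 1) :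
    ((t : ℝ) ≤ n + y ∧ n + y < t + 1) ↔ n = t := by
  refine ⟨fun ⟨hlo, hhi⟩ => ?_, fun hnt => ?_⟩
  · have : t < n + 1 := by exact_mod_cast (show (t : ℝ) < n + 1 by linarith)
    have : n < t + 1 := by exact_mod_cast (show (n : ℝ) < t + 1 by linarith)
    omega
  · subst hnt
    constructor <;> linarith

section

variable {p : ℕ}

lemma mul_add_eq_mul_add_iff {m n a b : ℕ} (ha : a < p) (hb : b < p) :
    p * m + a = p * n + b ↔ m = n ∧ a = b := by
  refine ⟨fun h => ?_, fun ⟨hmn, hab⟩ => hmn ▸ hab ▸ rfl⟩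
  have hp : 0 < p := by omega
  have hdiv := congrArg (· / p) h
  have hmod := congrArg (· % p) h
  simp only [Nat.mul_add_div hp, Nat.div_eq_of_lt ha, Nat.div_eq_of_lt hb, Nat.mul_add_mod,
    Nat.mod_eq_of_lt ha, Nat.mod_eq_of_lt hb, add_zero] at hdiv hmod
  exact ⟨hdiv, hmod⟩

lemma mod_pow_eq_sum_digits (k q : ℕ) : k % p ^ q = ∑ j ∈ range q, k / p ^ j % p * p ^ j := by
  induction q with
  | zero => simp [Nat.mod_one]
  | succ q ih => rw [Nat.mod_pow_succ, sum_range_succ, ih, mul_comm (p ^ q)]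

lemma sum_mul_pow_eq_iff {q : ℕ} {c c' : ℕ → ℕ} (hc : ∀ j < q, c j < p)
    (hc' : ∀ j < q, c' j < p) :
    ∑ j ∈ range q, c j * p ^ j = ∑ j ∈ range q, c' j * p ^ j ↔ ∀ j < q, c j = c' j := by
  induction q generalizing c c' with
  | zero => simp
  | succ q ih =>
    have hshift (e : ℕ → ℕ) : ∑ j ∈ range (q + 1), e j * p ^ j
        = p * ∑ j ∈ range q, e (j + 1) * p ^ j + e 0 := by
      rw [sum_range_succ', mul_sum, pow_zero, mul_one]
      simp only [pow_succ', mul_left_comm]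
    rw [hshift, hshift, mul_add_eq_mul_add_iff (hc 0 (by omega)) (hc' 0 (by omega)),
      ih (fun j hj => hc _ (by omega)) (fun j hj => hc' _ (by omega)), Nat.forall_lt_succ_left,
      and_comm]

lemma sum_mul_pow_sub_eq_iff {q : ℕ} {c c' : ℕ → ℕ} (hc : ∀ j < q, c j < p)
    (hc' : ∀ j < q, c' j < p) :
    ∑ j ∈ range q, c j * p ^ (q - 1 - j) = ∑ j ∈ range q, c' j * p ^ (q - 1 - j) ↔
      ∀ j < q, c j = c' j := by
  induction q with
  | zero => simp
  | succ q ih =>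
    have hshift (e : ℕ → ℕ) : ∑ j ∈ range (q + 1), e j * p ^ (q + 1 - 1 - j)
        = p * ∑ j ∈ range q, e j * p ^ (q - 1 - j) + e q := by
      rw [sum_range_succ, Nat.add_sub_cancel, Nat.sub_self, pow_zero, mul_one, mul_sum]
      congr 1
      refine sum_congr rfl fun j hj => ?_
      rw [show q - j = q - 1 - j + 1 by grind, pow_succ', mul_left_comm]
    rw [hshift, hshift, mul_add_eq_mul_add_iff (hc q (by omega)) (hc' q (by omega)),
      ih (fun j hj => hc _ (by omega)) (fun j hj => hc' _ (by omega)), Nat.forall_lt_succ_right]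

lemma pow_mul_sum_mul_inv_pow (hp : p ≠ 0) (q : ℕ) (c : ℕ → ℕ) :
    (p : ℝ) ^ q * ∑ j ∈ range q, (c j : ℝ) * ((p : ℝ)⁻¹) ^ (j + 1)
      = ((∑ j ∈ range q, c j * p ^ (q - 1 - j) : ℕ) : ℝ) := by
  push_cast
  rw [mul_sum]
  refine sum_congr rfl fun j hj => ?_
  have hsplit : (p : ℝ) ^ q = p ^ (q - 1 - j) * p ^ (j + 1) := by
    rw [← pow_add]; congr 1; grind
  rw [hsplit, inv_pow]
  field_simp

lemma radInv_eq_sum_of_le (hp : 1 < p) {k N : ℕ} (hkN : k ≤ N) :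
    radInv p k = ∑ j ∈ range N, ((k / p ^ j % p : ℕ) : ℝ) * ((p : ℝ)⁻¹) ^ (j + 1) := by
  refine sum_subset (range_subset_range.2 hkN) fun j _ hj => ?_
  have hkj : k < p ^ j :=
    (Nat.lt_pow_self hp).trans_le (Nat.pow_le_pow_right (by omega) (by simpa using hj))
  simp [Nat.div_eq_of_lt hkj]

lemma radInv_eq_sum_add (hp : 1 < p) (k q : ℕ) :
    radInv p k = ∑ j ∈ range q, ((k / p ^ j % p : ℕ) : ℝ) * ((p : ℝ)⁻¹) ^ (j + 1)
      + ((p : ℝ)⁻¹) ^ q * radInv p (k / p ^ q) := by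
  rw [radInv_eq_sum_of_le hp (Nat.le_add_left k q), sum_range_add,
    radInv_eq_sum_of_le hp (Nat.div_le_self k (p ^ q)), mul_sum]
  congr 1
  refine sum_congr rfl fun i _ => ?_
  rw [pow_add, ← Nat.div_div_eq_div_mul, add_assoc, pow_add]
  ring

lemma radInv_nonneg (p k : ℕ) : 0 ≤ radInv p k :=
  sum_nonneg fun _ _ => by positivity

lemma radInv_lt_one (hp : 1 < p) (k : ℕ) : radInv p k < 1 := by
  induction k using Nat.strong_induction_on with
  | _ k ih =>
  rcases k.eq_zero_or_pos with rfl | hk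
  · simp [radInv]
  have hpR : (0 : ℝ) < p := by positivity
  have hdigit : ((k % p : ℕ) : ℝ) + 1 ≤ p := by exact_mod_cast Nat.mod_lt k (by omega)
  have htail := ih (k / p) (Nat.div_lt_self hk hp)
  rw [radInv_eq_sum_add hp k 1]
  simp only [range_one, sum_singleton, pow_zero, Nat.div_one, zero_add, pow_one]
  calc ((k % p : ℕ) : ℝ) * (p : ℝ)⁻¹ + (p : ℝ)⁻¹ * radInv p (k / p)
      < ((k % p : ℕ) : ℝ) * (p : ℝ)⁻¹ + (p : ℝ)⁻¹ * 1 := by gcongr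
    _ = (((k % p : ℕ) : ℝ) + 1) / p := by ring
    _ ≤ 1 := (div_le_one hpR).2 hdigit

end

theorem stmt_11_general (p q t : ℕ) (hp : p.Prime)
    (b : ℕ → ℕ) (hb : ∀ j, b j < p)
    (htb : (t : ℝ) * ((p:ℝ) ^ q)⁻¹ =
      ∑ j ∈ Finset.range q, (b j : ℝ) * ((p:ℝ)⁻¹) ^ (j + 1))
    (k : ℕ) :
    ((t : ℝ) * ((p:ℝ) ^ q)⁻¹ ≤ radInv p k ∧
        radInv p k < ((t : ℝ) + 1) * ((p:ℝ) ^ q)⁻¹) ↔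
      k % p ^ q = ∑ j ∈ Finset.range q, b j * p ^ j := by
  have hpq : (0 : ℝ) < (p : ℝ) ^ q := by have := hp.pos; positivity
  have hdigit : ∀ j < q, k / p ^ j % p < p := fun j _ => Nat.mod_lt _ hp.pos
  have ht_digits : t = ∑ j ∈ range q, b j * p ^ (q - 1 - j) := by
    have : (t : ℝ) = ((∑ j ∈ range q, b j * p ^ (q - 1 - j) : ℕ) : ℝ) := by
      rw [← pow_mul_sum_mul_inv_pow hp.ne_zero, ← htb]
      field_simp
    exact_mod_cast this
  have hscaled : (p : ℝ) ^ q * radInv p k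
      = ((∑ j ∈ range q, k / p ^ j % p * p ^ (q - 1 - j) : ℕ) : ℝ) + radInv p (k / p ^ q) := by
    rw [radInv_eq_sum_add hp.one_lt k q, mul_add, pow_mul_sum_mul_inv_pow hp.ne_zero, inv_pow,
      mul_inv_cancel_left₀ hpq.ne']
  rw [mul_inv_le_iff₀' hpq, lt_mul_inv_iff₀' hpq, hscaled,
    natCast_le_add_and_add_lt_add_one_iff (radInv_nonneg _ _) (radInv_lt_one hp.one_lt _),
    ht_digits,
    sum_mul_pow_sub_eq_iff hdigit fun j _ => hb j, mod_pow_eq_sum_digits,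
    sum_mul_pow_eq_iff hdigit fun j _ => hb j]

/-- The radical-inverse value `x(k)` lies in the canonical interval
`[t·p^{-q}, (t+1)·p^{-q})` iff `k mod p^q = Σ_{j<q} b_j p^j`, where the
digits `b_j ∈ {0,…,p-1}` satisfy `t·p^{-q} = Σ_{j<q} b_j p^{-j-1}`. -/
theorem stmt_11 (p q t : ℕ) (hp : p.Prime) (hq : 1 ≤ q) (ht : t < p ^ q)
    (b : ℕ → ℕ) (hb : ∀ j, b j < p)
    (htb : (t : ℝ) * ((p:ℝ) ^ q)⁻¹ =
      ∑ j ∈ Finset.range q, (b j : ℝ) * ((p:ℝ)⁻¹) ^ (j + 1))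
    (k : ℕ) :
    ((t : ℝ) * ((p:ℝ) ^ q)⁻¹ ≤ radInv p k ∧
        radInv p k < ((t : ℝ) + 1) * ((p:ℝ) ^ q)⁻¹) ↔
      k % p ^ q = ∑ j ∈ Finset.range q, b j * p ^ j :=
  stmt_11_general p q t hp b hb htb k
end

section
/- Let d ≥ 2 and let n_1, ..., n_d be integers with each n_i ≥ 2, and n = Σ n_i. Then there exists a set of n points in R^d such that the number of maximal empty open axis-parallel boxes in R^d (boxes containing no point of the set, maximal with respect to inclusion among such boxes) is at least ∏_{i=1}^d (n_i - 1). -/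
/-!
Place `n i` points on a staircase in the coordinate plane of directions `i` and `i + 1` (indices
taken cyclically, which is where `d ≥ 2` enters): the `k`-th has `i`-th coordinate `k` and
`(i + 1)`-th coordinate `n (i + 1) + k`, every other coordinate `j` being `n j`. For each choice
of `a i ∈ {0, …, n i - 2}` the box `∏ j, (a j, n j + 1 + a (j - 1))` contains none of these points,
and each of its `2d` facets carries one of them in its relative interior, so it cannot be enlarged.
Distinct choices give distinct boxes. The count is meaningful because a finite set has only
finitely many maximal empty boxes: pushing each face of an empty box out to the nearest coordinate
of a point keeps it empty, so a maximal box has all its endpoints among those coordinates.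
-/

/-- An (open) axis-parallel box in `ℝ^d`, where intervals may be unbounded:
a product of open intervals with extended-real endpoints. -/
def IsOpenBox {d : ℕ} (B : Set (Fin d → ℝ)) : Prop :=
  ∃ l u : Fin d → EReal, B = {x | ∀ i, l i < (x i : EReal) ∧ (x i : EReal) < u i}

variable {d : ℕ}

def openBox (l u : Fin d → EReal) : Set (Fin d → ℝ) :=
  {x | ∀ i, l i < (x i : EReal) ∧ (x i : EReal) < u i}

def IsMaximalEmptyBox (S B : Set (Fin d → ℝ)) : Prop :=
  IsOpenBox B ∧ B ∩ S = ∅ ∧ ∀ B', IsOpenBox B' → B' ∩ S = ∅ → B ⊆ B' → B' = B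

lemma isOpenBox_openBox (l u : Fin d → EReal) : IsOpenBox (openBox l u) := ⟨l, u, rfl⟩

lemma openBox_subset_openBox {l u l' u' : Fin d → EReal} (h : ∀ i, l' i ≤ l i ∧ u i ≤ u' i) :
    openBox l u ⊆ openBox l' u' := fun _ hx i =>
  ⟨(h i).1.trans_lt (hx i).1, (hx i).2.trans_le (h i).2⟩

lemma le_of_openBox_subset {l u l' u' : Fin d → EReal} {x : Fin d → ℝ} (hx : x ∈ openBox l u)
    (h : openBox l u ⊆ openBox l' u') (i : Fin d) : l' i ≤ l i ∧ u i ≤ u' i := by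
  have mem_update : ∀ t : ℝ, l i < t → (t : EReal) < u i → l' i < t ∧ (t : EReal) < u' i :=
    fun t hlt htu => by
      simpa using h (fun j => by
        rcases eq_or_ne j i with rfl | hj
        · simpa using ⟨hlt, htu⟩
        · simpa [Function.update_of_ne hj] using hx j : Function.update x i t ∈ openBox l u) i
  constructor
  · by_contra! hl
    obtain ⟨t, hlt, htu⟩ := EReal.exists_between_coe_real (lt_min hl ((hx i).1.trans (hx i).2))
    exact (mem_update t hlt (htu.trans_le (min_le_right _ _))).1.not_gt
      (htu.trans_le (min_le_left _ _))
  · by_contra! hu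
    obtain ⟨t, hlt, htu⟩ := EReal.exists_between_coe_real (max_lt hu ((hx i).1.trans (hx i).2))
    exact (mem_update t ((le_max_right _ _).trans_lt hlt) htu).2.not_gt
      ((le_max_left _ _).trans_lt hlt)

noncomputable section Finiteness

open Finset

def lowerSnap (V : Finset EReal) (x : EReal) : EReal := (V.filter (· ≤ x)).sup id

def upperSnap (V : Finset EReal) (x : EReal) : EReal := (V.filter (x ≤ ·)).inf id

variable {V : Finset EReal} {x v : EReal}

lemma lowerSnap_le : lowerSnap V x ≤ x := Finset.sup_le fun _ hv => (mem_filter.1 hv).2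

lemma le_upperSnap : x ≤ upperSnap V x := Finset.le_inf fun _ hv => (mem_filter.1 hv).2

lemma lt_of_lowerSnap_lt (hv : v ∈ V) (h : lowerSnap V x < v) : x < v := by
  by_contra! hvx
  exact h.not_ge (le_sup (f := id) (mem_filter.2 ⟨hv, hvx⟩))

lemma lt_of_lt_upperSnap (hv : v ∈ V) (h : v < upperSnap V x) : v < x := by
  by_contra! hvx
  exact h.not_ge (inf_le (f := id) (mem_filter.2 ⟨hv, hvx⟩))

def snapValues (V : Finset EReal) : Finset EReal :=
  V.powerset.image (·.sup id) ∪ V.powerset.image (·.inf id)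

lemma lowerSnap_mem_snapValues : lowerSnap V x ∈ snapValues V :=
  mem_union_left _ (mem_image_of_mem _ (mem_powerset.2 (filter_subset _ _)))

lemma upperSnap_mem_snapValues : upperSnap V x ∈ snapValues V :=
  mem_union_right _ (mem_image_of_mem _ (mem_powerset.2 (filter_subset _ _)))

def coordValues (S : Finset (Fin d → ℝ)) : Finset EReal :=
  S.biUnion fun s => univ.image fun i => (s i : EReal)

lemma coe_mem_coordValues {S : Finset (Fin d → ℝ)} {s : Fin d → ℝ} (hs : s ∈ S) (i : Fin d) :
    (s i : EReal) ∈ coordValues S :=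
  mem_biUnion.2 ⟨s, hs, mem_image_of_mem _ (mem_univ i)⟩

lemma openBox_snap_inter_eq_empty {S : Finset (Fin d → ℝ)} {l u : Fin d → EReal}
    (h : openBox l u ∩ ↑S = ∅) :
    openBox (lowerSnap (coordValues S) ∘ l) (upperSnap (coordValues S) ∘ u) ∩ ↑S = ∅ := by
  refine Set.eq_empty_of_forall_notMem fun s ⟨hsB, hsS⟩ => ?_
  refine (Set.eq_empty_iff_forall_notMem.1 h) s ⟨fun i => ?_, hsS⟩
  have hv := coe_mem_coordValues hsS i
  exact ⟨lt_of_lowerSnap_lt hv (hsB i).1, lt_of_lt_upperSnap hv (hsB i).2⟩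

theorem setOf_isMaximalEmptyBox_finite (S : Finset (Fin d → ℝ)) :
    {B | IsMaximalEmptyBox (S : Set (Fin d → ℝ)) B}.Finite := by
  set W : Set EReal := ↑(snapValues (coordValues S))
  have hW : (Set.univ.pi fun _ : Fin d => W).Finite := Set.Finite.pi fun _ => W.toFinite
  refine ((hW.prod hW).image fun p => openBox p.1 p.2).subset ?_
  rintro B ⟨⟨l, u, rfl⟩, hempty, hmax⟩
  refine ⟨(lowerSnap _ ∘ l, upperSnap _ ∘ u), ⟨?_, ?_⟩, hmax _ (isOpenBox_openBox _ _)
    (openBox_snap_inter_eq_empty hempty)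
    (openBox_subset_openBox fun i => ⟨lowerSnap_le, le_upperSnap⟩)⟩
  · exact fun _ _ => lowerSnap_mem_snapValues
  · exact fun _ _ => upperSnap_mem_snapValues

end Finiteness

def realBox (a b : Fin d → ℝ) : Set (Fin d → ℝ) :=
  openBox (fun i => (a i : EReal)) (fun i => (b i : EReal))

lemma mem_realBox {a b x : Fin d → ℝ} : x ∈ realBox a b ↔ ∀ i, a i < x i ∧ x i < b i := by
  simp only [realBox, openBox, Set.mem_ofPred_eq, EReal.coe_lt_coe_iff]

lemma midpoint_mem_realBox {a b : Fin d → ℝ} (hab : ∀ i, a i < b i) :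
    (fun i => (a i + b i) / 2) ∈ realBox a b :=
  mem_realBox.2 fun i => ⟨by linarith [hab i], by linarith [hab i]⟩

lemma eq_of_realBox_eq {a b a' b' : Fin d → ℝ} (hab : ∀ i, a i < b i) (hab' : ∀ i, a' i < b' i)
    (h : realBox a b = realBox a' b') : a = a' := funext fun i =>
  (EReal.coe_le_coe_iff.1 (le_of_openBox_subset (midpoint_mem_realBox hab') h.ge i).1).antisymm
    (EReal.coe_le_coe_iff.1 (le_of_openBox_subset (midpoint_mem_realBox hab) h.le i).1)

theorem isMaximalEmptyBox_realBox {S : Set (Fin d → ℝ)} {a b : Fin d → ℝ}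
    (hab : ∀ i, a i < b i) (hempty : realBox a b ∩ S = ∅)
    (hlower : ∀ i, ∃ p ∈ S, p i = a i ∧ ∀ j ≠ i, a j < p j ∧ p j < b j)
    (hupper : ∀ i, ∃ p ∈ S, p i = b i ∧ ∀ j ≠ i, a j < p j ∧ p j < b j) :
    IsMaximalEmptyBox S (realBox a b) := by
  refine ⟨isOpenBox_openBox _ _, hempty, ?_⟩
  rintro _ ⟨l, u, rfl⟩ hempty' hsub
  have hle := le_of_openBox_subset (midpoint_mem_realBox hab) hsub
  have not_mem_facet : ∀ p ∈ S, ∀ i, (∀ j ≠ i, a j < p j ∧ p j < b j) →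
      l i < p i → (p i : EReal) < u i → False := fun p hpS i hp hl hu => by
    refine (Set.eq_empty_iff_forall_notMem.1 hempty') p ⟨fun j => ?_, hpS⟩
    rcases eq_or_ne j i with rfl | hj
    · exact ⟨hl, hu⟩
    · exact ⟨(hle j).1.trans_lt (EReal.coe_lt_coe (hp j hj).1),
        (EReal.coe_lt_coe (hp j hj).2).trans_le (hle j).2⟩
  have hl : l = fun i => (a i : EReal) := funext fun i => (hle i).1.antisymm <| by
    obtain ⟨p, hpS, hpi, hp⟩ := hlower i
    by_contra! h
    exact not_mem_facet p hpS i hp (hpi ▸ h) (hpi ▸ (EReal.coe_lt_coe (hab i)).trans_le (hle i).2)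
  have hu : u = fun i => (b i : EReal) := funext fun i => (hle i).2.antisymm' <| by
    obtain ⟨p, hpS, hpi, hp⟩ := hupper i
    by_contra! h
    exact not_mem_facet p hpS i hp (hpi ▸ (hle i).1.trans_lt (EReal.coe_lt_coe (hab i))) (hpi ▸ h)
  rw [hl, hu]
  rfl

namespace Staircase

open Finset

variable {n : Fin d → ℕ} (a : ∀ i, Fin (n i - 1))

lemma coe_add_one_lt (j : Fin d) : ((a j : ℕ) : ℝ) + 1 < n j := by
  have := (a j).isLt
  exact_mod_cast (by omega : (a j : ℕ) + 1 < n j)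

variable [NeZero d]

lemma add_one_ne_self (hd : 2 ≤ d) (i : Fin d) : i + 1 ≠ i := by
  intro h
  have h1 : (1 : Fin d) = 0 := add_left_cancel (by simpa using h : i + 1 = i + 0)
  rw [Fin.one_eq_zero_iff] at h1
  omega

variable (n) in
noncomputable def point (i : Fin d) (k : ℕ) : Fin d → ℝ :=
  fun j => if j = i then k else if j = i + 1 then n j + k else n j

variable (n) in
noncomputable def points : Finset (Fin d → ℝ) :=
  univ.image fun p : (Σ i, Fin (n i)) => point n p.1 p.2

lemma point_self (i : Fin d) (k : ℕ) : point n i k i = k := if_pos rfl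

lemma point_add_one (hd : 2 ≤ d) (i : Fin d) (k : ℕ) :
    point n i k (i + 1) = n (i + 1) + k := by
  rw [point, if_neg (add_one_ne_self hd i), if_pos rfl]

lemma point_of_ne {i j : Fin d} (k : ℕ) (h : j ≠ i) (h' : j ≠ i + 1) : point n i k j = n j := by
  rw [point, if_neg h, if_neg h']

lemma le_point_of_ne {i j : Fin d} (k : ℕ) (h : j ≠ i) : (n j : ℝ) ≤ point n i k j := by
  rw [point, if_neg h]
  split_ifs <;> simp

lemma point_mem_points {i : Fin d} {k : ℕ} (hk : k < n i) : point n i k ∈ points n :=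
  mem_image_of_mem _ (mem_univ (⟨i, k, hk⟩ : Σ i, Fin (n i)))

lemma card_points : (points n).card = ∑ i, n i := by
  rw [points, card_image_of_injective, card_univ, Fintype.card_sigma]
  · simp
  rintro ⟨i, k⟩ ⟨i', k'⟩ h
  have hi := congrFun h i
  simp only [point_self] at hi
  obtain rfl : i = i' := by
    by_contra hne
    have := le_point_of_ne (n := n) k' hne
    have : (k : ℝ) < n i := by exact_mod_cast k.isLt
    linarith
  obtain rfl : k = k' := Fin.ext (by simpa [point_self] using hi)
  rfl

variable (n) in
def upper (a : ∀ i, Fin (n i - 1)) (j : Fin d) : ℝ := n j + 1 + a (j - 1)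

lemma add_one_le_upper (j : Fin d) : (n j : ℝ) + 1 ≤ upper n a j := by
  rw [upper]
  linarith [(Nat.cast_nonneg (a (j - 1)) : (0 : ℝ) ≤ a (j - 1))]

lemma coe_lt_upper (j : Fin d) : ((a j : ℕ) : ℝ) < upper n a j := by
  linarith [coe_add_one_lt a j, add_one_le_upper a j]

lemma upper_add_one (i : Fin d) : upper n a (i + 1) = n (i + 1) + (a i + 1) := by
  rw [upper, add_sub_cancel_right]
  ring

variable (n) in
noncomputable def box (a : ∀ i, Fin (n i - 1)) : Set (Fin d → ℝ) :=
  realBox (fun j => a j) (upper n a)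

lemma box_inter_points_eq_empty (hd : 2 ≤ d) : box n a ∩ ↑(points n) = ∅ := by
  refine Set.eq_empty_of_forall_notMem fun x ⟨hx, hxS⟩ => ?_
  obtain ⟨⟨i, k⟩, -, rfl⟩ := mem_image.1 hxS
  have hi := (mem_realBox.1 hx i).1
  have hi' := (mem_realBox.1 hx (i + 1)).2
  rw [point_self] at hi
  rw [point_add_one hd, upper_add_one] at hi'
  have : (a i : ℕ) < k := by exact_mod_cast hi
  have : (k : ℕ) < a i + 1 := by exact_mod_cast (by linarith : (k : ℝ) < a i + 1)
  omega

lemma point_mem_facet_of_ne {i j : Fin d} (k : ℕ) (h : j ≠ i) (h' : j ≠ i + 1) :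
    ((a j : ℕ) : ℝ) < point n i k j ∧ point n i k j < upper n a j := by
  rw [point_of_ne k h h']
  constructor <;> linarith [coe_add_one_lt a j, add_one_le_upper a j]

lemma exists_point_lower_facet (hd : 2 ≤ d) (i : Fin d) : ∃ p ∈ points n, p i = a i ∧
    ∀ j ≠ i, ((a j : ℕ) : ℝ) < p j ∧ p j < upper n a j := by
  refine ⟨point n i (a i), point_mem_points (by omega), point_self i _, fun j hj => ?_⟩
  rcases eq_or_ne j (i + 1) with rfl | hj'
  · rw [point_add_one hd, upper_add_one]
    constructor <;> linarith [coe_add_one_lt a (i + 1), (Nat.cast_nonneg (a i) : (0 : ℝ) ≤ a i)]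
  · exact point_mem_facet_of_ne a _ hj hj'

lemma exists_point_upper_facet (hd : 2 ≤ d) (i : Fin d) : ∃ p ∈ points n, p i = upper n a i ∧
    ∀ j ≠ i, ((a j : ℕ) : ℝ) < p j ∧ p j < upper n a j := by
  obtain ⟨i, rfl⟩ : ∃ i', i' + 1 = i := ⟨i - 1, sub_add_cancel i 1⟩
  refine ⟨point n i (a i + 1), point_mem_points (by omega), ?_, fun j hj => ?_⟩
  · rw [point_add_one hd, upper_add_one]
    push_cast
    ring
  rcases eq_or_ne j i with rfl | hj'
  · rw [point_self]
    push_cast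
    constructor <;> linarith [coe_add_one_lt a j, add_one_le_upper a j]
  · exact point_mem_facet_of_ne a _ hj' hj

theorem isMaximalEmptyBox_box (hd : 2 ≤ d) : IsMaximalEmptyBox ↑(points n) (box n a) :=
  isMaximalEmptyBox_realBox (coe_lt_upper a) (box_inter_points_eq_empty a hd)
    (exists_point_lower_facet a hd) (exists_point_upper_facet a hd)

variable (n) in
lemma box_injective : Function.Injective (box n) := fun a a' h => funext fun i =>
  Fin.ext <| by exact_mod_cast congrFun (eq_of_realBox_eq (coe_lt_upper a) (coe_lt_upper a') h) i

end Staircase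

theorem stmt_19_general (d : ℕ) (hd : 2 ≤ d) (nv : Fin d → ℕ) :
    ∃ S : Finset (Fin d → ℝ), S.card = ∑ i, nv i ∧
      ∏ i, (nv i - 1) ≤
        {B : Set (Fin d → ℝ) | IsOpenBox B ∧ (B ∩ ↑S = ∅) ∧
          ∀ B' : Set (Fin d → ℝ), IsOpenBox B' → (B' ∩ ↑S = ∅) → B ⊆ B' →
            B' = B}.ncard := by
  have : NeZero d := ⟨by omega⟩
  refine ⟨Staircase.points nv, Staircase.card_points, ?_⟩
  calc ∏ i, (nv i - 1) = (Set.univ : Set (∀ i, Fin (nv i - 1))).ncard := by simp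
    _ ≤ {B | IsMaximalEmptyBox (Staircase.points nv : Set (Fin d → ℝ)) B}.ncard :=
      Set.ncard_le_ncard_of_injOn (Staircase.box nv)
        (fun a _ => Staircase.isMaximalEmptyBox_box a hd) (Staircase.box_injective nv).injOn
        (setOf_isMaximalEmptyBox_finite _)

/-- For `n = Σ n_i` with each `n_i ≥ 2`, there are `n` points in `ℝ^d` with at
least `∏ (n_i - 1)` maximal empty open axis-parallel boxes. -/
theorem stmt_19 (d : ℕ) (hd : 2 ≤ d) (nv : Fin d → ℕ) (hnv : ∀ i, 2 ≤ nv i) :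
    ∃ S : Finset (Fin d → ℝ), S.card = ∑ i, nv i ∧
      ∏ i, (nv i - 1) ≤
        {B : Set (Fin d → ℝ) | IsOpenBox B ∧ (B ∩ ↑S = ∅) ∧
          ∀ B' : Set (Fin d → ℝ), IsOpenBox B' → (B' ∩ ↑S = ∅) → B ⊆ B' →
            B' = B}.ncard :=
  stmt_19_general d hd nv
end
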